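/- arXiv:math/9812022 — 2 statements merged into one kernel-verified Lean document; each statement's English description precedes it below -/
import Mathlib

section
/- With the functions ψ_i defined in the context: (i) for 1 ≤ i ≤ tl, ψ_i = ψ_{i+1} · ∏_{a=1}^n (1 − z^{(a)}_{(t_a/t)i, i−1})^{−(γ^{(a)}_{(t_a/t)i} − μ_a + 1)}, where the factors with (t_a/t)i ∉ ℤ are equal to 1; and (ii) for 1 ≤ i ≤ tl+1, after expressing all variables from the later families Z_{i'} (i' > i) in terms of Z_i via the relations, ψ_i is a rational function of the variables Z_i, i.e. ψ_i ∈ ℂ(Z_i). -/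
open scoped BigOperators

namespace FermionicPaper

/-- The combinatorial data of a finite-dimensional simple Lie algebra `X_n` of type
`A_n, B_n, C_n, D_n, E_{6,7,8}, F_4, G_2`: the rank `n`, the numbers
`t_a = 2/(α_a|α_a) ∈ {1,2,3}` and the Cartan matrix `C_{ab} = t_a (α_a|α_b)`,
where `(·|·)` is the invariant bilinear form normalized by `(α|α) = 2` for long roots.
The axioms characterize exactly the Cartan data of the finite-dimensional simple Lie
algebras (symmetrizability, positive definiteness, connectedness, normalization). -/
structure CartanDatum (n : ℕ) : Type where
  t : Fin n → ℕ
  C : Fin n → Fin n → ℤ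
  t_pos : ∀ a, 0 < t a
  diag : ∀ a, C a a = 2
  offdiag_nonpos : ∀ a b, a ≠ b → C a b ≤ 0
  symm : ∀ a b, (t b : ℤ) * C a b = (t a : ℤ) * C b a
  posdef : ∀ v : Fin n → ℚ, v ≠ 0 → 0 < ∑ a, ∑ b, v a * ((C a b : ℚ) / (t a : ℚ)) * v b
  connected : ∀ S : Set (Fin n), S.Nonempty → (∀ a ∈ S, ∀ b, b ∉ S → C a b = 0) → ∀ a, a ∈ S
  normalized : ∃ a, t a = 1

variable {n : ℕ}

/-- The invariant form `(α_a | α_b)`. -/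
def CartanDatum.form (D : CartanDatum n) (a b : Fin n) : ℚ := (D.C a b : ℚ) / (D.t a : ℚ)

/-- `t = max_a t_a`. -/
def CartanDatum.tmax (D : CartanDatum n) : ℕ := Finset.univ.sup D.t

/-- The Cartan matrix as a rational matrix. -/
def CartanDatum.Cmat (D : CartanDatum n) : Matrix (Fin n) (Fin n) ℚ :=
  Matrix.of fun a b => (D.C a b : ℚ)

/-- The inverse Cartan matrix `C^{-1}`. -/
noncomputable def CartanDatum.Cinv (D : CartanDatum n) : Matrix (Fin n) (Fin n) ℚ := (D.Cmat)⁻¹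

/-- The invariant form on the weight space `P̄ ⊗ ℚ`, in the basis of fundamental weights;
`(Λ̄_a | Λ̄_b) = C^{-1}_{ab} / t_a`. -/
noncomputable def CartanDatum.wform (D : CartanDatum n) (μ ν : Fin n → ℚ) : ℚ :=
  ∑ a, ∑ b, μ a * (D.Cinv a b / (D.t a : ℚ)) * ν b

/-- The field `K = ℚ((q^{ℚ}))` of Hahn series in which all the `q`-series identities are stated. -/
abbrev K : Type := HahnSeries ℚ ℚ

/-- The monomial `q^c` for a rational exponent `c`. -/
noncomputable def hq (c : ℚ) : K := HahnSeries.single c 1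

/-- The extended `q`-binomial coefficient `{p+m choose m}` evaluated at `q^ε`
(`ε = 1` gives `q`, `ε = -1` gives `q^{-1}`); for `m ∈ ℤ_{≥0}` and integral `p` it equals
`(q^{p+1})_∞ (q^{m+1})_∞ / ((q)_∞ (q^{p+m+1})_∞) = ∏_{i=1}^m (1-q^{p+i})/(1-q^i)`. -/
noncomputable def qbinE (ε p : ℚ) (m : ℕ) : K :=
  ∏ i ∈ Finset.range m, (1 - hq (ε * (p + i + 1))) / (1 - hq (ε * (i + 1)))

/-- The truncated `q`-binomial coefficient `[p+m choose m]` at `q^ε`: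
it equals `{p+m choose m}` for `p ≥ 0` and `0` for `p < 0`. -/
noncomputable def qbinT (ε p : ℚ) (m : ℕ) : K := if 0 ≤ p then qbinE ε p m else 0

/-- `(q)_k = ∏_{j=1}^k (1 - q^j)`, at `q^ε`. -/
noncomputable def qpoch (ε : ℚ) (k : ℕ) : K := ∏ i ∈ Finset.range k, (1 - hq (ε * (i + 1)))

/-- `{p+m choose m}_1 = Γ(p+m+1)/(Γ(p+1)Γ(m+1)) = ∏_{i=1}^m (p+i)/i`, the `q = 1` value. -/
def bin1 (p : ℚ) (m : ℕ) : ℚ := ∏ i ∈ Finset.range m, (p + i + 1) / (i + 1)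

/-- A family `m^{(a)}_i` (or `ν^{(a)}_i`) has finitely many nonzero members. -/
def FinSupp (m : Fin n → ℕ → ℕ) : Prop :=
  (Function.support fun x : Fin n × ℕ => m x.1 x.2).Finite

variable (D : CartanDatum n)

/-- The vacancy numbers
`p^{(a)}_i = Σ_j ν^{(a)}_j min(i,j) − Σ_b (α_a|α_b) Σ_k min(t_b i, t_a k) m^{(b)}_k`. -/
noncomputable def pinf (ν m : Fin n → ℕ → ℕ) (a : Fin n) (i : ℕ) : ℚ :=
  (∑ᶠ j : ℕ, (ν a j : ℚ) * (min i j : ℕ))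
    - ∑ b, ∑ᶠ k : ℕ, D.form a b * (min (D.t b * i) (D.t a * k) : ℕ) * (m b k)

/-- The quadratic form
`c({m}) = ½ Σ_{a,b} (α_a|α_b) Σ_{j,k} min(t_b j, t_a k) m^{(a)}_j m^{(b)}_k
  − Σ_a Σ_{j,k} ν^{(a)}_j min(j,k) m^{(a)}_k` (allowing rational arguments `m`). -/
noncomputable def cinf (ν : Fin n → ℕ → ℕ) (m : Fin n → ℕ → ℚ) : ℚ :=
  (1/2) * (∑ a, ∑ b, ∑ᶠ j : ℕ, ∑ᶠ k : ℕ,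
      D.form a b * (min (D.t b * j) (D.t a * k) : ℕ) * m a j * m b k)
    - ∑ a, ∑ᶠ j : ℕ, ∑ᶠ k : ℕ, (ν a j : ℚ) * (min j k : ℕ) * m a k

/-- `c({m})` for integral `m`. -/
noncomputable def cinfN (ν m : Fin n → ℕ → ℕ) : ℚ := cinf D ν (fun a j => (m a j : ℚ))

/-- The constraint `Σ_{a,i} i m^{(a)}_i α_a = Σ_{a,i} i ν^{(a)}_i Λ̄_a − λ`, written in
the coordinates of the fundamental weight basis (`α_a = Σ_b C_{ba} Λ̄_b`). -/
def Constr (ν m : Fin n → ℕ → ℕ) (lam : Fin n → ℚ) : Prop :=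
  ∀ b, (∑ a, ∑ᶠ i : ℕ, (i : ℚ) * m a i * D.C b a) = (∑ᶠ i : ℕ, (i : ℚ) * ν b i) - lam b

/-- The admissible configurations for the fermionic form `M(W,λ,q)`. -/
def admM (ν : Fin n → ℕ → ℕ) (lam : Fin n → ℚ) : Set (Fin n → ℕ → ℕ) :=
  {m | FinSupp m ∧ Constr D ν m lam ∧ ∀ a, ∀ i : ℕ, 1 ≤ i → 0 ≤ pinf D ν m a i}

/-- The fermionic form `M(W,λ,q^ε)` for `W = ⊗_{a,j} (W^{(a)}_j)^{⊗ ν^{(a)}_j}` and `λ ∈ P̄`. -/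
noncomputable def M (ε : ℚ) (ν : Fin n → ℕ → ℕ) (lam : Fin n → ℚ) : K :=
  ∑ᶠ m ∈ admM D ν lam,
    hq (ε * cinfN D ν m) *
      ∏ᶠ a : Fin n, ∏ᶠ i ∈ {i : ℕ | 1 ≤ i}, qbinT ε (pinf D ν m a i) (m a i)

/-- Level-`l` restricted vacancy numbers (all indices restricted to `H_l`). -/
noncomputable def pl (l : ℕ) (ν m : Fin n → ℕ → ℕ) (a : Fin n) (i : ℕ) : ℚ :=
  (∑ j ∈ Finset.Icc 1 (D.t a * l), (ν a j : ℚ) * (min j i : ℕ))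
    - ∑ b, ∑ k ∈ Finset.Icc 1 (D.t b * l),
        D.form a b * (min (D.t b * i) (D.t a * k) : ℕ) * (m b k)

/-- Level-`l` restricted quadratic form `c_l({m})`. -/
noncomputable def cl (l : ℕ) (ν m : Fin n → ℕ → ℕ) : ℚ :=
  (1/2) * (∑ a, ∑ b, ∑ j ∈ Finset.Icc 1 (D.t a * l), ∑ k ∈ Finset.Icc 1 (D.t b * l),
      D.form a b * (min (D.t b * j) (D.t a * k) : ℕ) * (m a j) * (m b k))
    - ∑ a, ∑ j ∈ Finset.Icc 1 (D.t a * l), ∑ k ∈ Finset.Icc 1 (D.t a * l),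
        (ν a j : ℚ) * (min j k : ℕ) * (m a k)

/-- A family is supported in `H_l = {(a,j) | 1 ≤ j ≤ t_a l}`. -/
def SuppIn (l : ℕ) (m : Fin n → ℕ → ℕ) : Prop :=
  ∀ a j, m a j ≠ 0 → 1 ≤ j ∧ j ≤ D.t a * l

/-- Level-`l` constraint `Σ_{(a,i)∈H_l} i m^{(a)}_i α_a = Σ_{(a,i)∈H_l} i ν^{(a)}_i Λ̄_a − λ`. -/
def ConstrL (l : ℕ) (ν m : Fin n → ℕ → ℕ) (lam : Fin n → ℚ) : Prop :=
  ∀ b, (∑ a, ∑ i ∈ Finset.Icc 1 (D.t a * l), (i : ℚ) * m a i * D.C b a)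
      = (∑ i ∈ Finset.Icc 1 (D.t b * l), (i : ℚ) * ν b i) - lam b

/-- The level-`l` restricted fermionic form `M_l(W,q^ε)`. -/
noncomputable def Ml (ε : ℚ) (l : ℕ) (ν : Fin n → ℕ → ℕ) : K :=
  ∑ᶠ m ∈ {m | SuppIn D l m ∧ ConstrL D l ν m 0 ∧
      ∀ a, ∀ i ∈ Finset.Icc 1 (D.t a * l), 0 ≤ pl D l ν m a i},
    hq (ε * cl D l ν m) *
      ∏ a, ∏ i ∈ Finset.Icc 1 (D.t a * l), qbinT ε (pl D l ν m a i) (m a i)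

/-- The fermionic form `N_l(W,λ,q^ε)`: no positivity imposed on the vacancy numbers, and
extended `q`-binomial coefficients are used. -/
noncomputable def Nl (ε : ℚ) (l : ℕ) (ν : Fin n → ℕ → ℕ) (lam : Fin n → ℚ) : K :=
  ∑ᶠ m ∈ {m | SuppIn D l m ∧ ConstrL D l ν m lam},
    hq (ε * cl D l ν m) *
      ∏ a, ∏ i ∈ Finset.Icc 1 (D.t a * l), qbinE ε (pl D l ν m a i) (m a i)

/-- `N_∞(W,λ,q)` at `q = 1`. -/
noncomputable def Ninf1 (ν : Fin n → ℕ → ℕ) (lam : Fin n → ℚ) : ℚ :=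
  ∑ᶠ m ∈ {m | FinSupp m ∧ Constr D ν m lam},
    ∏ᶠ a : Fin n, ∏ᶠ i ∈ {i : ℕ | 1 ≤ i}, bin1 (pinf D ν m a i) (m a i)

/-- `N_l(W,λ,q)` at `q = 1`. -/
noncomputable def Nl1 (l : ℕ) (ν : Fin n → ℕ → ℕ) (lam : Fin n → ℚ) : ℚ :=
  ∑ᶠ m ∈ {m | SuppIn D l m ∧ ConstrL D l ν m lam},
    ∏ a, ∏ i ∈ Finset.Icc 1 (D.t a * l), bin1 (pl D l ν m a i) (m a i)

/-- The data of `W₁ = W^{(a₀)}_{j₀} ⊗ W^{(a₀)}_{j₀} ⊗ W`. -/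
def nu1 (ν : Fin n → ℕ → ℕ) (a₀ : Fin n) (j₀ : ℕ) : Fin n → ℕ → ℕ :=
  fun a j => ν a j + if a = a₀ ∧ j = j₀ then 2 else 0

/-- The data of `W₂ = W^{(a₀)}_{j₀+1} ⊗ W^{(a₀)}_{j₀−1} ⊗ W` (a factor with index `0`
being inert/omitted). -/
def nu2 (ν : Fin n → ℕ → ℕ) (a₀ : Fin n) (j₀ : ℕ) : Fin n → ℕ → ℕ :=
  fun a j => ν a j + (if a = a₀ ∧ j = j₀ + 1 then 1 else 0)
    + (if a = a₀ ∧ j = j₀ - 1 then 1 else 0)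

/-- The data of `W₃ = ⊗_{b ∼ a₀} ⊗_{k=0}^{-C_{a₀b}-1} W^{(b)}_{⌊(C_{b a₀} j₀ − k)/C_{a₀ b}⌋} ⊗ W`
(a factor with index `0` being inert/omitted); repeated indices are counted with
multiplicity. -/
def nu3 (ν : Fin n → ℕ → ℕ) (a₀ : Fin n) (j₀ : ℕ) : Fin n → ℕ → ℕ :=
  fun b j => ν b j +
    if D.C a₀ b < 0 then
      ((Finset.range (-(D.C a₀ b)).toNat).filter
        (fun k : ℕ => (((D.C b a₀) * (j₀ : ℤ) - (k : ℤ)).fdiv (D.C a₀ b)).toNat = j)).card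
    else 0

/-! ### The variables `z^{(a)}_{j,i}` and the functions `ψ_i`. -/

/-- The field `ℂ(Z_1)` of rational functions in the variables
`Z_1 = {z^{(a)}_{j,0}}` (indexed by all of `Fin n × ℕ`; only the indices in `H_l`
are relevant). -/
abbrev K1 (n : ℕ) : Type := FractionRing (MvPolynomial (Fin n × ℕ) ℂ)

/-- The elements `z^{(a)}_{j,i} ∈ ℂ(Z_1)`: `z^{(a)}_{j,0}` are the variables, and
`z^{(a)}_{j,i} = z^{(a)}_{j,i−1} ∏_b (1 − z^{(b)}_{(t_b/t)i,i−1})^{−C_{ba}(j−(t_a/t)i)}`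
(where `z^{(b)}_{(t_b/t)i,i−1} := 0`, i.e. the factor is `1`, whenever
`(t_b/t)i ∉ ℤ`; the exponent is `−(C_{ba}j − C_{ab}(t_b/t)i)`). -/
noncomputable def zv (D : CartanDatum n) : ℕ → Fin n → ℕ → K1 n
  | 0 => fun a j => algebraMap (MvPolynomial (Fin n × ℕ) ℂ) (K1 n) (MvPolynomial.X (a, j))
  | (i+1) => fun a j =>
      zv D i a j * ∏ b,
        (if D.tmax ∣ D.t b * (i+1) then
          (1 - zv D i b ((D.t b * (i+1)) / D.tmax))
            ^ (-((D.C b a) * (j : ℤ) - (D.C a b) * (((D.t b * (i+1)) / D.tmax : ℕ) : ℤ)))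
        else 1)

/-- `γ^{(a)}_j = Σ_{k=1}^{t_a l} ν^{(a)}_k min(j,k)`. -/
def gammaf (D : CartanDatum n) (l : ℕ) (ν : Fin n → ℕ → ℕ) (a : Fin n) (j : ℕ) : ℕ :=
  ∑ k ∈ Finset.Icc 1 (D.t a * l), ν a k * min j k

/-- `μ_a = γ^{(a)}_{t_a l} − λ_a`. -/
def muf (D : CartanDatum n) (l : ℕ) (ν : Fin n → ℕ → ℕ) (lam : Fin n → ℤ) (a : Fin n) : ℤ :=
  (gammaf D l ν a (D.t a * l) : ℤ) - lam a

/-- `ψ_i = ∏_{(a,j) ∈ H_l[i]} (1 − z^{(a)}_{j,(t/t_a)j−1})^{−(γ^{(a)}_j − μ_a + 1)}`,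
where `H_l[i] = {(a,j) | (t_a/t)(i−1) < j ≤ t_a l}`; in particular
`ψ_{tl+1} = 1` (empty product). -/
noncomputable def psi (D : CartanDatum n) (l : ℕ) (ν : Fin n → ℕ → ℕ)
    (lam : Fin n → ℤ) (i : ℕ) : K1 n :=
  ∏ a, ∏ j ∈ Finset.Icc 1 (D.t a * l),
    if D.t a * (i - 1) < D.tmax * j then
      (1 - zv D ((D.tmax / D.t a) * j - 1) a j)
        ^ (-((gammaf D l ν a j : ℤ) - muf D l ν lam a + 1))
    else 1


section Quad
variable {n : ℕ}

lemma sum_ite_eval (g : Fin n → ℚ) (c0 : Fin n) (x : ℚ) :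
    (∑ c, (if c = c0 then x else 0) * g c) = x * g c0 := by
  rw [Finset.sum_eq_single_of_mem c0 (Finset.mem_univ c0)]
  · simp
  · intro b _ hb; simp [hb]

/-- Evaluate the quadratic form on a vector supported on a finite list of points. -/
lemma quad_eval (F : Fin n → Fin n → ℚ) (f : ℕ → Fin n) (w : ℕ → ℚ) (r : ℕ) :
    (∑ c, ∑ d, (∑ i ∈ Finset.range (r+1), if c = f i then w i else 0) * F c d *
        (∑ j ∈ Finset.range (r+1), if d = f j then w j else 0))
      = ∑ i ∈ Finset.range (r+1), ∑ j ∈ Finset.range (r+1), w i * F (f i) (f j) * w j := by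
  have h1 : ∀ c : Fin n,
      (∑ d, F c d * (∑ j ∈ Finset.range (r+1), if d = f j then w j else 0))
        = ∑ j ∈ Finset.range (r+1), F c (f j) * w j := by
    intro c
    simp only [Finset.mul_sum]
    rw [Finset.sum_comm]
    refine Finset.sum_congr rfl fun j _ => ?_
    have : ∀ d : Fin n, F c d * (if d = f j then w j else 0)
        = (if d = f j then F c (f j) * w j else 0) := by
      intro d; by_cases h : d = f j <;> simp [h]
    rw [Finset.sum_congr rfl (fun d _ => this d)]
    simp
  have h2 : ∀ c : Fin n,
      (∑ d, (∑ i ∈ Finset.range (r+1), if c = f i then w i else 0) * F c d *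
        (∑ j ∈ Finset.range (r+1), if d = f j then w j else 0))
      = (∑ i ∈ Finset.range (r+1), if c = f i then w i else 0) *
          (∑ j ∈ Finset.range (r+1), F c (f j) * w j) := by
    intro c
    rw [← h1 c, Finset.mul_sum]
    refine Finset.sum_congr rfl fun d _ => by ring
  rw [Finset.sum_congr rfl (fun c _ => h2 c)]
  simp only [Finset.sum_mul]
  rw [Finset.sum_comm]
  refine Finset.sum_congr rfl fun i _ => ?_
  rw [sum_ite_eval (fun c => ∑ j ∈ Finset.range (r+1), F c (f j) * w j) (f i) (w i),
    Finset.mul_sum]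
  refine Finset.sum_congr rfl fun j _ => by ring

/-- Tridiagonal reduction of a symmetric double sum. -/
lemma tridiag_sum (B : ℕ → ℕ → ℚ) (u : ℕ → ℚ) :
    ∀ r : ℕ, (∀ i j, i + 2 ≤ j → j ≤ r → B i j = 0) → (∀ i j, B i j = B j i) →
    (∑ i ∈ Finset.range (r+1), ∑ j ∈ Finset.range (r+1), u i * B i j * u j)
      = (∑ i ∈ Finset.range (r+1), B i i * u i ^ 2)
        + 2 * ∑ i ∈ Finset.range r, B i (i+1) * u i * u (i+1) := by
  intro r
  induction r with
  | zero => intro _ _; simp; ring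
  | succ r ih =>
    intro hB hsym
    have hB' : ∀ i j, i + 2 ≤ j → j ≤ r → B i j = 0 := fun i j h1 h2 => hB i j h1 (by omega)
    have key : ∀ k ∈ Finset.range (r+1),
        (∑ j ∈ Finset.range (r+2), u k * B k j * u j)
          = (∑ j ∈ Finset.range (r+1), u k * B k j * u j) + u k * B k (r+1) * u (r+1) := by
      intro k _; rw [Finset.sum_range_succ]
    rw [Finset.sum_range_succ, Finset.sum_congr rfl key]
    rw [Finset.sum_add_distrib, ih hB' hsym]
    have hrow : (∑ j ∈ Finset.range (r+2), u (r+1) * B (r+1) j * u j)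
        = u (r+1) * B (r+1) r * u r + u (r+1) * B (r+1) (r+1) * u (r+1) := by
      rw [Finset.sum_range_succ]
      congr 1
      rw [Finset.sum_eq_single_of_mem r (by simp [Finset.mem_range])]
      intro b hb hbne
      have : B (r+1) b = 0 := by
        rw [hsym]; exact hB b (r+1) (by simp [Finset.mem_range] at hb; omega) (le_refl _)
      simp [this]
    have hcol : (∑ k ∈ Finset.range (r+1), u k * B k (r+1) * u (r+1))
        = u r * B r (r+1) * u (r+1) := by
      rw [Finset.sum_eq_single_of_mem r (by simp [Finset.mem_range])]
      intro b hb hbne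
      have : B b (r+1) = 0 := hB b (r+1) (by simp [Finset.mem_range] at hb; omega) (le_refl _)
      simp [this]
    rw [hrow, hcol, Finset.sum_range_succ (fun i => B i i * u i ^ 2),
      Finset.sum_range_succ (fun i => B i (i+1) * u i * u (i+1)),
      Finset.sum_range_succ (fun i => B i i * u i ^ 2)]
    have h2 : B (r+1) r = B r (r+1) := hsym _ _
    rw [h2, Finset.sum_range_succ (fun i => B i i * u i ^ 2)]; ring

end Quad

section Basic
variable {n : ℕ} (D : CartanDatum n)

lemma CartanDatum.tq_pos (a : Fin n) : (0:ℚ) < (D.t a : ℚ) := by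
  exact_mod_cast D.t_pos a

lemma CartanDatum.symmQ (a b : Fin n) :
    (D.t b : ℚ) * (D.C a b : ℚ) = (D.t a : ℚ) * (D.C b a : ℚ) := by
  exact_mod_cast congrArg (fun z : ℤ => (z : ℚ)) (D.symm a b)

lemma CartanDatum.form_symm' (a b : Fin n) :
    (D.C a b : ℚ) / (D.t a : ℚ) = (D.C b a : ℚ) / (D.t b : ℚ) := by
  have h := D.symmQ a b
  have ha := (D.tq_pos a).ne'
  have hb := (D.tq_pos b).ne'
  field_simp
  linarith [h]

lemma CartanDatum.C_ne_zero_iff (a b : Fin n) : D.C a b ≠ 0 ↔ D.C b a ≠ 0 := by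
  have h := D.symm a b
  have ha := D.t_pos a
  have hb := D.t_pos b
  constructor <;> intro h1 h2 <;> rw [h2] at h <;> simp at h
  · rcases h with h | h <;> omega
  · rcases h with h | h <;> omega

/-- For distinct connected vertices, both Cartan entries are `≤ -1`. -/
lemma CartanDatum.C_le_neg_one {a b : Fin n} (hab : a ≠ b) (h : D.C a b ≠ 0) :
    D.C a b ≤ -1 := by
  have := D.offdiag_nonpos a b hab
  omega

/-- Key positivity consequence: `C a b * C b a ≤ 3` for `a ≠ b`. -/
lemma CartanDatum.prod_le_three {a b : Fin n} (hab : a ≠ b) : D.C a b * D.C b a ≤ 3 := by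
  by_contra hc
  push_neg at hc
  set w : ℕ → ℚ := fun i => if i = 0 then 2 else (-(D.C b a) : ℚ) with hw
  set f : ℕ → Fin n := fun i => if i = 0 then a else b with hf
  have hvne : (fun c : Fin n => ∑ i ∈ Finset.range (1+1), if c = f i then w i else 0) ≠ 0 := by
    intro h0
    have h2 : (∑ i ∈ Finset.range (1+1), if a = f i then w i else 0) = 2 := by
      simp only [Finset.sum_range_succ, Finset.sum_range_zero, hf, hw]
      simp [hab]
    rw [congrFun h0 a] at h2
    simp at h2
  have hpos : (0:ℚ) < ∑ c, ∑ d,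
      (∑ i ∈ Finset.range (1+1), if c = f i then w i else 0) * ((D.C c d:ℚ)/(D.t c:ℚ)) *
      (∑ j ∈ Finset.range (1+1), if d = f j then w j else 0) := D.posdef _ hvne
  rw [quad_eval (fun c d => (D.C c d : ℚ) / (D.t c : ℚ)) f w 1] at hpos
  simp only [Finset.sum_range_succ, Finset.sum_range_zero, hf, hw] at hpos
  norm_num at hpos
  have ha := D.tq_pos a
  have hb := D.tq_pos b
  have hdiag_a : ((D.C a a : ℤ) : ℚ) = 2 := by rw [D.diag a]; norm_num
  have hdiag_b : ((D.C b b : ℤ) : ℚ) = 2 := by rw [D.diag b]; norm_num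
  have hfs : (D.C a b : ℚ) / (D.t a : ℚ) = (D.C b a : ℚ) / (D.t b : ℚ) := D.form_symm' a b
  rw [hdiag_a, hdiag_b] at hpos
  have key : (2:ℚ) * (2 / (D.t a:ℚ)) * 2 + 2 * ((D.C a b:ℚ) / (D.t a:ℚ)) * (-(D.C b a:ℚ))
      + ((-(D.C b a:ℚ)) * ((D.C b a:ℚ) / (D.t b:ℚ)) * 2
        + (-(D.C b a:ℚ)) * (2 / (D.t b:ℚ)) * (-(D.C b a:ℚ)))
      = (8 - 2 * ((D.C a b:ℚ) * (D.C b a:ℚ))) / (D.t a:ℚ) := by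
    field_simp
    ring
  have hpos' : 0 < (8 - 2 * ((D.C a b:ℚ) * (D.C b a:ℚ))) / (D.t a:ℚ) := by
    rw [← key]
    convert hpos using 1
    ring
  have h4 : 0 < 8 - 2 * ((D.C a b:ℚ) * (D.C b a:ℚ)) := by
    have := mul_pos hpos' ha
    rwa [div_mul_cancel₀ _ ha.ne'] at this
  have hcq : (4:ℚ) ≤ (D.C a b : ℚ) * (D.C b a : ℚ) := by
    have : (4:ℤ) ≤ D.C a b * D.C b a := by omega
    exact_mod_cast this
  linarith

end Basic

section Path
variable {n : ℕ} (D : CartanDatum n)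

def CartanDatum.edgeR (D : CartanDatum n) (a b : Fin n) : Prop := a ≠ b ∧ D.C a b ≠ 0

lemma CartanDatum.rtg_edge (a b : Fin n) : Relation.ReflTransGen D.edgeR a b := by
  refine D.connected {c | Relation.ReflTransGen D.edgeR a c} ⟨a, .refl⟩ ?_ b
  intro c hc d hd
  by_contra hC
  apply hd
  have hcd : c ≠ d := by rintro rfl; exact hd hc
  exact Relation.ReflTransGen.tail hc ⟨hcd, hC⟩

/-- A walk predicate: there is a walk of length `m` from `a` to `b`. -/
def CartanDatum.WalkP (D : CartanDatum n) (a b : Fin n) (m : ℕ) : Prop :=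
  ∃ x : ℕ → Fin n, x 0 = a ∧ x m = b ∧ ∀ k, k < m → D.edgeR (x k) (x (k+1))

lemma CartanDatum.walk_exists (a b : Fin n) : ∃ m, D.WalkP a b m := by
  have h : Relation.ReflTransGen D.edgeR a b := D.rtg_edge a b
  induction h with
  | refl => exact ⟨0, fun _ => a, rfl, rfl, fun k hk => absurd hk (by omega)⟩
  | @tail c d hac hcd ih =>
    obtain ⟨m, x, h0, hm, he⟩ := ih
    refine ⟨m+1, fun k => if k ≤ m then x k else d, by simp [h0], by simp, ?_⟩
    intro k hk
    show D.edgeR (if k ≤ m then x k else d) (if k+1 ≤ m then x (k+1) else d)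
    by_cases hkm : k < m
    · rw [if_pos (by omega : k ≤ m), if_pos (by omega : k+1 ≤ m)]
      exact he k hkm
    · have hkeq : k = m := by omega
      subst hkeq
      rw [if_pos le_rfl, if_neg (by omega), hm]
      exact hcd

lemma CartanDatum.skip_path {a b : Fin n} {m : ℕ} (x : ℕ → Fin n)
    (h0 : x 0 = a) (hm : x m = b) (he : ∀ k, k < m → D.edgeR (x k) (x (k+1)))
    (d i : ℕ) (hd : 1 ≤ d) (him : i + d < m)
    (hbridge : D.edgeR (x i) (x (i + d + 1))) : D.WalkP a b (m - d) := by
  refine ⟨fun k => if k ≤ i then x k else x (k + d), by simp [h0], ?_, ?_⟩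
  · show (if m - d ≤ i then x (m-d) else x (m - d + d)) = b
    rw [if_neg (by omega : ¬ (m - d ≤ i))]
    have h2 : m - d + d = m := by omega
    rw [h2, hm]
  · intro k hk
    show D.edgeR (if k ≤ i then x k else x (k + d)) (if k+1 ≤ i then x (k+1) else x (k+1+d))
    by_cases h1 : k + 1 ≤ i
    · rw [if_pos (by omega), if_pos h1]
      exact he k (by omega)
    · by_cases h2 : k ≤ i
      · have : k = i := by omega
        subst this
        rw [if_pos le_rfl, if_neg h1]
        have : k + 1 + d = k + d + 1 := by omega
        rw [this]
        exact hbridge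
      · rw [if_neg h2, if_neg h1]
        have : k + 1 + d = k + d + 1 := by omega
        rw [this]
        exact he (k + d) (by omega)

lemma CartanDatum.exists_induced_path (a b : Fin n) :
    ∃ (m : ℕ) (x : ℕ → Fin n), x 0 = a ∧ x m = b ∧
      (∀ k, k < m → D.edgeR (x k) (x (k+1))) ∧
      (∀ i j, i < j → j ≤ m → x i ≠ x j) ∧
      (∀ i j, i + 2 ≤ j → j ≤ m → D.C (x i) (x j) = 0) := by
  classical
  have hex : ∃ m, D.WalkP a b m := D.walk_exists a b
  set m := Nat.find hex with hmdef
  obtain ⟨x, h0, hm, he⟩ := Nat.find_spec hex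
  have hmin : ∀ m' < m, ¬ D.WalkP a b m' := fun m' h => Nat.find_min hex h
  have hinj : ∀ i j, i < j → j ≤ m → x i ≠ x j := by
    intro i j hij hjm heq
    by_cases hjmeq : j = m
    · -- truncate: x i = b already
      exact hmin i (by omega) ⟨x, h0, by rw [heq, hjmeq, hm], fun k hk => he k (by omega)⟩
    · have hbridge : D.edgeR (x i) (x (i + (j - i) + 1)) := by
        have hidx : i + (j - i) + 1 = j + 1 := by omega
        rw [hidx, heq]
        exact he j (by omega)
      have := D.skip_path x h0 hm he (j - i) i (by omega) (by omega) hbridge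
      exact hmin (m - (j - i)) (by omega) this
  refine ⟨m, x, h0, hm, he, hinj, ?_⟩
  intro i j hij hjm
  by_contra hC
  have hne : x i ≠ x j := hinj i j (by omega) hjm
  have hbridge : D.edgeR (x i) (x (i + (j - i - 1) + 1)) := by
    have : i + (j - i - 1) + 1 = j := by omega
    rw [this]
    exact ⟨hne, hC⟩
  have := D.skip_path x h0 hm he (j - i - 1) i (by omega) (by omega) hbridge
  exact hmin (m - (j - i - 1)) (by omega) this

end Path

section Chain
variable {n : ℕ} (D : CartanDatum n)

set_option maxHeartbeats 1000000 in
/-- No chordless chain can contain two non-simple bonds. -/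
lemma CartanDatum.bad_chain (f : ℕ → Fin n) (s : ℕ) (τ : ℕ)
    (hinj : ∀ i j, i ≤ s+2 → j ≤ s+2 → f i = f j → i = j)
    (hchord : ∀ i j, i + 2 ≤ j → j ≤ s+2 → D.C (f i) (f j) = 0)
    (hmidt : ∀ k, 1 ≤ k → k ≤ s + 1 → D.t (f k) = τ)
    (hmidC : ∀ k, 1 ≤ k → k + 1 ≤ s + 1 → D.C (f k) (f (k+1)) = -1)
    (hP : 2 ≤ D.C (f 0) (f 1) * D.C (f 1) (f 0))
    (hP' : 2 ≤ D.C (f (s+1)) (f (s+2)) * D.C (f (s+2)) (f (s+1))) : False := by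
  classical
  set r : ℕ := s + 2 with hrdef
  set t0 : ℚ := (D.t (f 0) : ℚ) with ht0def
  set tr : ℚ := (D.t (f r) : ℚ) with htrdef
  set τq : ℚ := (τ : ℚ) with hτdef
  have ht0 : 0 < t0 := D.tq_pos (f 0)
  have htr : 0 < tr := D.tq_pos (f r)
  have hτ : 0 < τq := by
    rw [hτdef, ← hmidt 1 le_rfl (by omega)]
    exact_mod_cast D.t_pos (f 1)
  set m0 : ℚ := -((D.t (f 1) : ℚ) * (D.C (f 0) (f 1) : ℚ)) with hm0def
  set m1 : ℚ := -((D.t (f r) : ℚ) * (D.C (f (r-1)) (f r) : ℚ)) with hm1def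
  set x : ℚ := m0 / (2 * t0) with hxdef
  set y : ℚ := m1 / (2 * tr) with hydef
  set w : ℕ → ℚ := fun i => if i = 0 then x else if i = r then y else 1 with hwdef
  set W : ℕ → ℚ := fun i => (D.t (f i) : ℚ) * w i with hWdef
  set B : ℕ → ℕ → ℚ := fun i j => (D.t (f j) : ℚ) * (D.C (f i) (f j) : ℚ) with hBdef
  -- nonvanishing
  have hvne : (fun c : Fin n => ∑ i ∈ Finset.range (r+1), if c = f i then W i else 0) ≠ 0 := by
    intro h0
    have h2 : (∑ i ∈ Finset.range (r+1), if f 1 = f i then W i else 0) = W 1 := by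
      rw [Finset.sum_eq_single_of_mem 1 (Finset.mem_range.mpr (by omega))]
      · simp
      · intro i hi hine
        rw [if_neg]
        intro hfe
        exact hine (hinj 1 i (by omega) (by simp [Finset.mem_range] at hi; omega) hfe).symm
    rw [congrFun h0 (f 1)] at h2
    have hW1 : W 1 = τq := by
      simp only [hWdef, hwdef]
      rw [if_neg (by omega), if_neg (by omega), hmidt 1 le_rfl (by omega)]
      simp [hτdef]
    rw [hW1] at h2
    simp at h2
    exact hτ.ne' (by linarith)
  have hpos : (0:ℚ) < ∑ c, ∑ d,
      (∑ i ∈ Finset.range (r+1), if c = f i then W i else 0) * ((D.C c d:ℚ)/(D.t c:ℚ)) *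
      (∑ j ∈ Finset.range (r+1), if d = f j then W j else 0) := D.posdef _ hvne
  rw [quad_eval (fun c d => (D.C c d : ℚ) / (D.t c : ℚ)) f W r] at hpos
  have hterm : ∀ i j : ℕ, W i * ((D.C (f i) (f j):ℚ)/(D.t (f i):ℚ)) * W j
      = w i * B i j * w j := by
    intro i j
    have hti := (D.tq_pos (f i)).ne'
    simp only [hWdef, hBdef]
    field_simp
  rw [Finset.sum_congr rfl (fun i _ => Finset.sum_congr rfl (fun j _ => hterm i j))] at hpos
  rw [tridiag_sum B w r
    (fun i j h1 h2 => by simp only [hBdef]; rw [hchord i j h1 h2]; simp)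
    (fun i j => by
      simp only [hBdef]
      have := D.symmQ (f i) (f j)
      linarith)] at hpos
  -- evaluate the diagonal sum
  have hdiag : (∑ i ∈ Finset.range (r+1), B i i * w i ^ 2)
      = 2 * t0 * x^2 + 2 * tr * y^2 + (s+1) * (2 * τq) := by
    have hBii : ∀ i : ℕ, B i i = 2 * (D.t (f i) : ℚ) := by
      intro i
      simp only [hBdef]
      rw [D.diag (f i)]
      push_cast
      ring
    rw [Finset.sum_range_succ, Finset.sum_range_succ']
    have hmid : ∀ i ∈ Finset.range (s+1), B (i+1) (i+1) * w (i+1) ^ 2 = 2 * τq := by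
      intro i hi
      simp only [Finset.mem_range] at hi
      rw [hBii, hmidt (i+1) (by omega) (by omega)]
      simp only [hwdef]
      rw [if_neg (by omega), if_neg (by omega)]
      simp [hτdef]
    rw [Finset.sum_congr rfl hmid, Finset.sum_const, Finset.card_range]
    rw [hBii 0, hBii r]
    simp only [hwdef, nsmul_eq_mul, if_true,
      show ¬ r = 0 from by omega, if_false, eq_self_iff_true]
    push_cast
    ring
  -- evaluate the off-diagonal sum
  have hoff : (∑ i ∈ Finset.range r, B i (i+1) * w i * w (i+1))
      = -m0 * x + -m1 * y + (s:ℚ) * (-τq) := by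
    rw [Finset.sum_range_succ, Finset.sum_range_succ']
    have hmid : ∀ i ∈ Finset.range s, B (i+1) (i+1+1) * w (i+1) * w (i+1+1) = -τq := by
      intro i hi
      simp only [Finset.mem_range] at hi
      simp only [hBdef, hwdef]
      rw [hmidC (i+1) (by omega) (by omega), hmidt (i+2) (by omega) (by omega)]
      rw [if_neg (by omega), if_neg (by omega), if_neg (by omega), if_neg (by omega)]
      simp [hτdef]
    rw [Finset.sum_congr rfl hmid, Finset.sum_const, Finset.card_range]
    simp only [hBdef, hwdef, hm0def, hm1def, nsmul_eq_mul, if_true, eq_self_iff_true,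
      show ¬ r = 0 from by omega, show ¬ (1:ℕ) = 0 from by omega,
      show ¬ (1:ℕ) = r from by omega, show ¬ s+1 = 0 from by omega,
      show ¬ s+1 = r from by omega, show s+1+1 = r from by omega,
      show r - 1 = s+1 from by omega, if_false]
    push_cast
    ring
  rw [hdiag, hoff] at hpos
  -- final contradiction
  set P : ℚ := ((D.C (f 0) (f 1) * D.C (f 1) (f 0) : ℤ) : ℚ) with hPdef
  set P' : ℚ := ((D.C (f (r-1)) (f r) * D.C (f r) (f (r-1)) : ℤ) : ℚ) with hP'def
  have hm0sq : m0^2 = t0 * τq * P := by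
    have hs := D.symmQ (f 0) (f 1)
    have ht1 : (D.t (f 1) : ℚ) = τq := by
      rw [hmidt 1 le_rfl (by omega)]
    rw [hm0def, hPdef, ht0def, ← ht1]
    push_cast
    linear_combination ((D.t (f 1) : ℚ) * (D.C (f 0) (f 1) : ℚ)) * hs
  have hm1sq : m1^2 = tr * τq * P' := by
    have hs := D.symmQ (f (r-1)) (f r)
    have ht1 : (D.t (f (r-1)) : ℚ) = τq := by
      rw [show r - 1 = s+1 from by omega, hmidt (s+1) (by omega) (by omega)]
    rw [hm1def, hP'def, htrdef, ← ht1]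
    push_cast
    linear_combination ((D.t (f r) : ℚ) * (D.C (f (r-1)) (f r) : ℚ)) * hs
  have hPge : (2:ℚ) ≤ P := by
    rw [hPdef]; exact_mod_cast hP
  have hP'ge : (2:ℚ) ≤ P' := by
    rw [hP'def]
    have : r - 1 = s + 1 := by omega
    rw [this]
    exact_mod_cast hP'
  have hex : 2 * t0 * x^2 + (-m0) * x * 2 = -(m0^2) / (2 * t0) := by
    rw [hxdef]; field_simp; ring
  have hey : 2 * tr * y^2 + (-m1) * y * 2 = -(m1^2) / (2 * tr) := by
    rw [hydef]; field_simp; ring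
  have hfin : 2 * t0 * x^2 + 2 * tr * y^2 + (s+1) * (2*τq)
      + 2 * (-m0 * x + -m1 * y + (s:ℚ) * (-τq))
      = -(m0^2)/(2*t0) - (m1^2)/(2*tr) + 2 * τq := by
    linear_combination hex + hey
  rw [hfin] at hpos
  have e1 : (-(t0 * τq * P)) / (2 * t0) = -(τq * P / 2) := by
    rw [div_eq_iff (mul_pos two_pos ht0).ne']; ring
  have e2 : (tr * τq * P') / (2 * tr) = τq * P' / 2 := by
    rw [div_eq_iff (mul_pos two_pos htr).ne']; ring
  rw [hm0sq, hm1sq, e1, e2] at hpos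
  nlinarith [mul_nonneg hτ.le (by linarith : (0:ℚ) ≤ P - 2),
    mul_nonneg hτ.le (by linarith : (0:ℚ) ≤ P' - 2), hpos]

end Chain

section Div
variable {n : ℕ} (D : CartanDatum n)

lemma CartanDatum.edge_le {a b : Fin n} (h : D.edgeR a b) :
    D.C a b ≤ -1 ∧ D.C b a ≤ -1 := by
  obtain ⟨hne, hC⟩ := h
  exact ⟨D.C_le_neg_one hne hC, D.C_le_neg_one (Ne.symm hne) ((D.C_ne_zero_iff a b).mp hC)⟩

lemma CartanDatum.simple_edge {a b : Fin n} (h : D.edgeR a b)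
    (h1 : D.C a b * D.C b a = 1) : D.C a b = -1 ∧ D.C b a = -1 := by
  obtain ⟨hu, hv⟩ := D.edge_le h
  rcases Int.mul_eq_one_iff_eq_one_or_neg_one.mp h1 with ⟨h2, h3⟩ | ⟨h2, h3⟩
  · omega
  · exact ⟨h2, h3⟩

lemma CartanDatum.run_const {m : ℕ} (x : ℕ → Fin n)
    (he : ∀ k, k < m → D.edgeR (x k) (x (k+1))) (i : ℕ) :
    ∀ j, i ≤ j → j ≤ m →
      (∀ k, i ≤ k → k < j → D.C (x k) (x (k+1)) * D.C (x (k+1)) (x k) = 1) →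
      D.t (x i) = D.t (x j) := by
  intro j
  induction j with
  | zero =>
    intro h1 _ _
    have : i = 0 := by omega
    rw [this]
  | succ j ih =>
    intro h1 h2 hsimp
    by_cases hij : i = j + 1
    · rw [hij]
    · have hij' : i ≤ j := by omega
      have ht := ih hij' (by omega) (fun k hk1 hk2 => hsimp k hk1 (by omega))
      rw [ht]
      obtain ⟨hu, hv⟩ := D.simple_edge (he j (by omega)) (hsimp j hij' (by omega))
      have hs := D.symm (x j) (x (j+1))
      rw [hu, hv] at hs
      have : (D.t (x (j+1)) : ℤ) = (D.t (x j) : ℤ) := by linarith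
      exact_mod_cast this.symm

lemma CartanDatum.t_comparable (a b : Fin n) : D.t a ∣ D.t b ∨ D.t b ∣ D.t a := by
  classical
  obtain ⟨m, x, h0, hm, he, hinj, hchord⟩ := D.exists_induced_path a b
  have hp_ge : ∀ k, k < m → 1 ≤ D.C (x k) (x (k+1)) * D.C (x (k+1)) (x k) := by
    intro k hk
    obtain ⟨hu, hv⟩ := D.edge_le (he k hk)
    nlinarith
  have hp_le : ∀ k, k < m → D.C (x k) (x (k+1)) * D.C (x (k+1)) (x k) ≤ 3 := by
    intro k hk
    exact D.prod_le_three (he k hk).1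
  by_cases hall : ∀ k, k < m → D.C (x k) (x (k+1)) * D.C (x (k+1)) (x k) = 1
  · left
    rw [← h0, ← hm,
      D.run_const x he 0 m (by omega) le_rfl (fun k _ hk => hall k hk)]
  · push_neg at hall
    have hQ : ∃ k, k < m ∧ ¬ D.C (x k) (x (k+1)) * D.C (x (k+1)) (x k) = 1 := hall
    obtain ⟨hαm, hαne⟩ := Nat.find_spec hQ
    set α := Nat.find hQ with hαdef
    have hαmin : ∀ k, k < α → k < m → D.C (x k) (x (k+1)) * D.C (x (k+1)) (x k) = 1 := by
      intro k hk hkm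
      have := Nat.find_min hQ hk
      push_neg at this
      exact this hkm
    have hpα : 2 ≤ D.C (x α) (x (α+1)) * D.C (x (α+1)) (x α) := by
      have := hp_ge α hαm
      omega
    by_cases h2 : ∃ k, α < k ∧ k < m ∧ 2 ≤ D.C (x k) (x (k+1)) * D.C (x (k+1)) (x k)
    · -- two multi-edges: contradiction by bad_chain
      exfalso
      obtain ⟨hβα, hβm, hβp⟩ := Nat.find_spec h2
      set β := Nat.find h2 with hβdef
      have hβmin : ∀ k, α < k → k < β → D.C (x k) (x (k+1)) * D.C (x (k+1)) (x k) = 1 := by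
        intro k hk1 hk2
        have hnot := Nat.find_min h2 hk2
        push_neg at hnot
        have := hnot hk1
        have h1 := hp_ge k (by omega)
        omega
      set s := β - α - 1 with hsdef
      have hβeq : β = α + s + 1 := by omega
      set f : ℕ → Fin n := fun k => x (α + k) with hfdef
      have hmidsimple : ∀ k, 1 ≤ k → k ≤ s →
          D.C (x (α+k)) (x (α+k+1)) * D.C (x (α+k+1)) (x (α+k)) = 1 := by
        intro k hk1 hk2
        exact hβmin (α+k) (by omega) (by omega)
      refine D.bad_chain f s (D.t (x (α+1))) ?_ ?_ ?_ ?_ ?_ ?_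
      · intro i j hi hj hfe
        by_contra hne
        rcases Nat.lt_or_ge i j with h | h
        · exact hinj (α+i) (α+j) (by omega) (by omega) hfe
        · exact hinj (α+j) (α+i) (by omega) (by omega) hfe.symm
      · intro i j hij hjs
        exact hchord (α+i) (α+j) (by omega) (by omega)
      · intro k hk1 hk2
        simp only [hfdef]
        have := D.run_const x he (α+1) (α+k) (by omega) (by omega)
          (fun k' hk1' hk2' => hβmin k' (by omega) (by omega))
        exact this.symm
      · intro k hk1 hk2
        simp only [hfdef]
        have hidx : α + (k+1) = α + k + 1 := by omega
        rw [hidx]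
        exact (D.simple_edge (he (α+k) (by omega)) (hmidsimple k hk1 (by omega))).1
      · simp only [hfdef]
        have h1 : α + 0 = α := by omega
        have h2' : α + 1 = α + 1 := rfl
        rw [h1]
        exact hpα
      · simp only [hfdef]
        have h1 : α + (s+1) = β := by omega
        have h2' : α + (s+2) = β + 1 := by omega
        rw [h1, h2']
        exact hβp
    · -- only one multi-edge
      push_neg at h2
      have hafter : ∀ k, α < k → k < m → D.C (x k) (x (k+1)) * D.C (x (k+1)) (x k) = 1 := by
        intro k hk1 hk2
        have h3 := h2 k hk1 hk2
        have h4 := hp_ge k hk2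
        omega
      have t1 : D.t a = D.t (x α) := by
        rw [← h0]
        exact D.run_const x he 0 α (by omega) (by omega)
          (fun k hk1 hk2 => hαmin k hk2 (by omega))
      have t2 : D.t (x (α+1)) = D.t b := by
        rw [← hm]
        exact D.run_const x he (α+1) m (by omega) le_rfl
          (fun k hk1 hk2 => hafter k (by omega) hk2)
      obtain ⟨hu, hv⟩ := D.edge_le (he α hαm)
      have hple := hp_le α hαm
      have hsym := D.symm (x α) (x (α+1))
      have hone : D.C (x α) (x (α+1)) = -1 ∨ D.C (x (α+1)) (x α) = -1 := by
        by_contra hc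
        push_neg at hc
        obtain ⟨hc1, hc2⟩ := hc
        have h5 : D.C (x α) (x (α+1)) ≤ -2 := by omega
        have h6 : D.C (x (α+1)) (x α) ≤ -2 := by omega
        nlinarith
      rcases hone with h | h
      · -- t (x α) divides t (x (α+1))
        left
        rw [t1, ← t2]
        have : ((D.t (x (α+1)) : ℤ)) = (D.t (x α) : ℤ) * (-(D.C (x (α+1)) (x α))) := by
          rw [h] at hsym
          linarith
        have hdvd : (D.t (x α) : ℤ) ∣ (D.t (x (α+1)) : ℤ) := ⟨_, this⟩
        exact_mod_cast hdvd
      · right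
        have : ((D.t (x α) : ℤ)) = (D.t (x (α+1)) : ℤ) * (-(D.C (x α) (x (α+1)))) := by
          rw [h] at hsym
          linarith
        have hdvd : (D.t (x (α+1)) : ℤ) ∣ (D.t (x α) : ℤ) := ⟨_, this⟩
        rw [← t2, t1]
        exact_mod_cast hdvd

lemma CartanDatum.t_dvd_tmax (a : Fin n) : D.t a ∣ D.tmax := by
  obtain ⟨a0, _⟩ := D.normalized
  have hne : (Finset.univ : Finset (Fin n)).Nonempty := ⟨a0, Finset.mem_univ a0⟩
  obtain ⟨b, -, hb⟩ := Finset.exists_mem_eq_sup Finset.univ hne D.t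
  rcases D.t_comparable a b with h | h
  · rw [CartanDatum.tmax, hb]
    exact h
  · have hle : D.t a ≤ D.t b := by
      have := Finset.le_sup (f := D.t) (Finset.mem_univ a)
      omega
    have hge : D.t b ≤ D.t a := Nat.le_of_dvd (D.t_pos a) h
    rw [CartanDatum.tmax, hb, le_antisymm hle hge]

lemma CartanDatum.tmax_pos : 0 < D.tmax := by
  obtain ⟨a0, ha0⟩ := D.normalized
  have := Finset.le_sup (f := D.t) (Finset.mem_univ a0)
  rw [ha0] at this
  exact lt_of_lt_of_le one_pos this

end Div

section Psi
variable {n : ℕ}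

/-- The key index dichotomy. -/
lemma cond_dichotomy (ta sa i j : ℕ) (hta : 0 < ta) (hi : 1 ≤ i) :
    ta * (i-1) < (ta * sa) * j ↔ (ta * i < (ta * sa) * j ∨ i = sa * j) := by
  rw [mul_assoc]
  constructor
  · intro h
    have h1 : i - 1 < sa * j := lt_of_mul_lt_mul_left h (Nat.zero_le ta)
    have h2 : i ≤ sa * j := by omega
    rcases Nat.eq_or_lt_of_le h2 with h3 | h3
    · exact Or.inr h3
    · exact Or.inl ((Nat.mul_lt_mul_left hta).mpr h3)
  · intro h
    rcases h with h | h
    · have : ta * (i-1) ≤ ta * i := Nat.mul_le_mul_left ta (by omega)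
      omega
    · rw [← h]
      exact (Nat.mul_lt_mul_left hta).mpr (by omega)

lemma zpow_mem_IF {K L : Type*} [Field K] [Field L] [Algebra K L]
    (E : IntermediateField K L) {x : L} (hx : x ∈ E) (k : ℤ) : x ^ k ∈ E := by
  cases k with
  | ofNat k => simpa using pow_mem hx k
  | negSucc k =>
    rw [zpow_negSucc]
    exact inv_mem (pow_mem hx (k+1))

lemma zv_mem_adjoin (D : CartanDatum n) (l i : ℕ) (hi : 1 ≤ i) :
    ∀ m, i - 1 ≤ m → m ≤ D.tmax * l → ∀ a (j : ℕ), D.t a * m < D.tmax * j → j ≤ D.t a * l →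
      zv D m a j ∈ IntermediateField.adjoin ℂ
        {x : K1 n | ∃ (a : Fin n) (j : ℕ),
          D.t a * (i - 1) < D.tmax * j ∧ j ≤ D.t a * l ∧ x = zv D (i-1) a j} := by
  have htm := D.tmax_pos
  intro m
  induction m with
  | zero =>
    intro h1 _ a j h3 h4
    have hi0 : i - 1 = 0 := by omega
    refine IntermediateField.subset_adjoin ℂ _ ⟨a, j, ?_, h4, by rw [hi0]⟩
    rw [hi0]
    exact h3
  | succ m ih =>
    intro h1 h2 a j h3 h4
    by_cases hm : i - 1 ≤ m
    · -- use the recursion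
      have hml : m ≤ D.tmax * l := by omega
      rw [zv]
      refine mul_mem (ih hm hml a j ?_ h4) (prod_mem fun b _ => ?_)
      · calc D.t a * m ≤ D.t a * (m+1) := Nat.mul_le_mul_left _ (by omega)
          _ < D.tmax * j := h3
      · by_cases hdvd : D.tmax ∣ D.t b * (m+1)
        · rw [if_pos hdvd]
          refine zpow_mem_IF _ (sub_mem (one_mem _) (ih hm hml b (D.t b * (m+1) / D.tmax) ?_ ?_)) _
          · rw [Nat.mul_div_cancel' hdvd]
            have := D.t_pos b
            calc D.t b * m < D.t b * (m+1) := (Nat.mul_lt_mul_left this).mpr (by omega)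
              _ = _ := rfl
          · -- t b * (m+1) / tmax ≤ t b * l
            have hle : D.t b * (m+1) ≤ D.tmax * (D.t b * l) := by
              calc D.t b * (m+1) ≤ D.t b * (D.tmax * l) := Nat.mul_le_mul_left _ h2
                _ = D.tmax * (D.t b * l) := by ring
            have := Nat.div_le_div_right (c := D.tmax) hle
            rwa [Nat.mul_div_cancel_left _ htm] at this
        · rw [if_neg hdvd]
          exact one_mem _
    · -- base case m + 1 = i - 1 is impossible unless m+1 = i-1; handle base here
      have him : i - 1 = m + 1 := by omega
      refine IntermediateField.subset_adjoin ℂ _ ⟨a, j, ?_, h4, by rw [him]⟩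
      rw [him]
      exact h3

lemma psi_mem_adjoin (D : CartanDatum n) (l : ℕ) (ν : Fin n → ℕ → ℕ) (lam : Fin n → ℤ)
    (i : ℕ) (hi : 1 ≤ i) (hil : i ≤ D.tmax * l + 1) :
    psi D l ν lam i ∈ IntermediateField.adjoin ℂ
        {x : K1 n | ∃ (a : Fin n) (j : ℕ),
          D.t a * (i - 1) < D.tmax * j ∧ j ≤ D.t a * l ∧ x = zv D (i-1) a j} := by
  have htm := D.tmax_pos
  rw [psi]
  refine prod_mem fun a _ => prod_mem fun j hj => ?_
  rw [Finset.mem_Icc] at hj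
  by_cases hc : D.t a * (i - 1) < D.tmax * j
  · rw [if_pos hc]
    have hta := D.t_pos a
    have hdvd := D.t_dvd_tmax a
    have hts : D.t a * (D.tmax / D.t a) = D.tmax := Nat.mul_div_cancel' hdvd
    have hsa : 0 < D.tmax / D.t a := by
      rcases Nat.eq_zero_or_pos (D.tmax / D.t a) with h | h
      · rw [h, Nat.mul_zero] at hts; omega
      · exact h
    refine zpow_mem_IF _ (sub_mem (one_mem _) (zv_mem_adjoin D l i hi _ ?_ ?_ a j ?_ hj.2)) _
    · -- i - 1 ≤ (tmax/ta)*j - 1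
      have h1 : D.t a * (i-1) < D.t a * ((D.tmax / D.t a) * j) := by
        rw [← mul_assoc, hts]; exact hc
      have h2 : i - 1 < (D.tmax / D.t a) * j := lt_of_mul_lt_mul_left h1 (Nat.zero_le _)
      omega
    · -- (tmax/ta)*j - 1 ≤ tmax * l
      have h1 : (D.tmax / D.t a) * j ≤ (D.tmax / D.t a) * (D.t a * l) :=
        Nat.mul_le_mul_left _ hj.2
      have h2 : (D.tmax / D.t a) * (D.t a * l) = D.tmax * l := by
        rw [← mul_assoc, Nat.mul_comm (D.tmax / D.t a) (D.t a), hts]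
      omega
    · -- t a * ((tmax/ta)*j - 1) < tmax * j
      have h1 : 1 ≤ (D.tmax / D.t a) * j := Nat.mul_pos hsa (by omega)
      calc D.t a * ((D.tmax / D.t a) * j - 1)
          < D.t a * ((D.tmax / D.t a) * j) := (Nat.mul_lt_mul_left hta).mpr (by omega)
        _ = D.tmax * j := by rw [← mul_assoc, hts]
  · rw [if_neg hc]
    exact one_mem _

lemma psi_step (D : CartanDatum n) (l : ℕ) (ν : Fin n → ℕ → ℕ) (lam : Fin n → ℤ)
    (i : ℕ) (hi : 1 ≤ i) (hil : i ≤ D.tmax * l) :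
    psi D l ν lam i
      = psi D l ν lam (i+1) * ∏ a,
          (if D.tmax ∣ D.t a * i then
            (1 - zv D (i-1) a ((D.t a * i) / D.tmax))
              ^ (-((gammaf D l ν a ((D.t a * i) / D.tmax) : ℤ) - muf D l ν lam a + 1))
          else 1) := by
  have htm := D.tmax_pos
  rw [psi, psi, ← Finset.prod_mul_distrib]
  simp only [Nat.add_sub_cancel]
  refine Finset.prod_congr rfl fun a _ => ?_
  have hta := D.t_pos a
  have hdvd := D.t_dvd_tmax a
  have hts : D.t a * (D.tmax / D.t a) = D.tmax := Nat.mul_div_cancel' hdvd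
  have hsa : 0 < D.tmax / D.t a := by
    rcases Nat.eq_zero_or_pos (D.tmax / D.t a) with h | h
    · rw [h, Nat.mul_zero] at hts; omega
    · exact h
  set sa := D.tmax / D.t a with hsadef
  by_cases hdd : D.tmax ∣ D.t a * i
  · -- the exceptional column
    rw [if_pos hdd]
    have hsai : sa ∣ i := by
      rcases hdd with ⟨c, hc⟩
      have : D.t a * i = D.t a * (sa * c) := by
        rw [← mul_assoc, hts]; exact hc
      have hic : i = sa * c := Nat.eq_of_mul_eq_mul_left hta this
      exact ⟨c, hic⟩
    set j0 := D.t a * i / D.tmax with hj0def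
    have hj0 : sa * j0 = i := by
      have h1 : j0 = i / sa := by
        rw [hj0def, ← hts, Nat.mul_div_mul_left _ _ hta]
      rw [h1]
      exact Nat.mul_div_cancel' hsai
    have hj0mem : j0 ∈ Finset.Icc 1 (D.t a * l) := by
      rw [Finset.mem_Icc]
      constructor
      · rcases Nat.eq_zero_or_pos j0 with h | h
        · rw [h, Nat.mul_zero] at hj0; omega
        · omega
      · -- j0 ≤ t a * l
        have h1 : sa * j0 ≤ sa * (D.t a * l) := by
          rw [hj0]
          calc i ≤ D.tmax * l := hil
            _ = sa * (D.t a * l) := by rw [← hts]; ring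
        exact Nat.le_of_mul_le_mul_left h1 hsa
    have hcond0 : D.t a * (i - 1) < D.tmax * j0 := by
      have : D.tmax * j0 = D.t a * i := by
        rw [← hts, mul_assoc, hj0]
      rw [this]
      exact (Nat.mul_lt_mul_left hta).mpr (by omega)
    have hcond0' : ¬ (D.t a * i < D.tmax * j0) := by
      have : D.tmax * j0 = D.t a * i := by
        rw [← hts, mul_assoc, hj0]
      omega
    rw [← Finset.mul_prod_erase _ _ hj0mem, ← Finset.mul_prod_erase _ _ hj0mem]
    rw [if_pos hcond0, if_neg hcond0', one_mul]
    have hswap : sa * j0 - 1 = i - 1 := by rw [hj0]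
    rw [hswap, mul_comm]
    congr 1
    refine Finset.prod_congr rfl fun j hj => ?_
    rw [Finset.mem_erase] at hj
    refine if_congr ?_ rfl rfl
    rw [← hts, cond_dichotomy (D.t a) sa i j hta hi]
    constructor
    · rintro (h | h)
      · exact h
      · exfalso
        apply hj.1
        have : sa * j = sa * j0 := by rw [hj0, h]
        exact Nat.eq_of_mul_eq_mul_left hsa this
    · intro h
      exact Or.inl h
  · rw [if_neg hdd, mul_one]
    refine Finset.prod_congr rfl fun j hj => ?_
    rw [Finset.mem_Icc] at hj
    refine if_congr ?_ rfl rfl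
    rw [← hts, cond_dichotomy (D.t a) sa i j hta hi]
    constructor
    · rintro (h | h)
      · exact h
      · exfalso
        apply hdd
        refine ⟨j, ?_⟩
        rw [← hts, h]
        ring
    · intro h
      exact Or.inl h

end Psi


/-- Proposition: recursion and rationality of the `ψ_i`.
(i) `ψ_i = ψ_{i+1} ∏_a (1 − z^{(a)}_{(t_a/t)i,i−1})^{−(γ^{(a)}_{(t_a/t)i} − μ_a + 1)}`
for `1 ≤ i ≤ tl` (factors with `(t_a/t)i ∉ ℤ` equal to `1`); and
(ii) `ψ_i ∈ ℂ(Z_i)` for `1 ≤ i ≤ tl+1`. -/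
theorem statement13 (n : ℕ) (D : CartanDatum n) (l : ℕ) (hl : 1 ≤ l)
    (ν : Fin n → ℕ → ℕ) (hν : SuppIn D l ν) (lam : Fin n → ℤ) :
    (∀ i : ℕ, 1 ≤ i → i ≤ D.tmax * l →
      psi D l ν lam i
        = psi D l ν lam (i+1) * ∏ a,
            (if D.tmax ∣ D.t a * i then
              (1 - zv D (i-1) a ((D.t a * i) / D.tmax))
                ^ (-((gammaf D l ν a ((D.t a * i) / D.tmax) : ℤ) - muf D l ν lam a + 1))
            else 1))
    ∧ (∀ i : ℕ, 1 ≤ i → i ≤ D.tmax * l + 1 →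
      psi D l ν lam i ∈ IntermediateField.adjoin ℂ
        {x : K1 n | ∃ (a : Fin n) (j : ℕ),
          D.t a * (i - 1) < D.tmax * j ∧ j ≤ D.t a * l ∧ x = zv D (i-1) a j}) := by
  constructor
  · intro i hi hil
    exact psi_step D l ν lam i hi hil
  · intro i hi hil
    exact psi_mem_adjoin D l ν lam i hi hil

end FermionicPaper
end

section
/- Let Q^{(1)}_1,…,Q^{(n)}_1 ∈ ℤ[x_1^{±1},…,x_n^{±1}] be Weyl-group-invariant Laurent polynomials such that Q^{(a)}_1 = x_a (1 + Σ_β c_β e^{−β}) with the sum over nonzero β ∈ Σ_{b=1}^n ℤ_{≥0}α_b (as holds, for instance, when Q^{(a)}_1 = Σ_λ d_λ ch V(λ) with d_{Λ̄_a} = 1 and d_λ = 0 unless λ ∈ Λ̄_a − Σ_b ℤ_{≥0}α_b). Then det_{1≤a,b≤n} (∂Q^{(a)}_1/∂x_b) = ∏_{α>0} (1 − e^{−α}), the product running over all positive roots α of X_n. -/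
open scoped BigOperators

namespace FermionicPaper

variable {n : ℕ}

variable (D : CartanDatum n)

/-! ### Characters of `X_n` as functions on the Cartan subalgebra.

Weights are written in the coordinates of the fundamental weight basis, so a weight
`μ = Σ_a μ_a Λ̄_a` is the vector `(μ_a)_a`.  Putting `x_a = e^{Λ̄_a} = e^{h_a}`, the
monomial `e^{μ}` is the function `h ↦ exp(Σ_a μ_a h_a)` of `h ∈ ℂ^n`. -/

/-- `e^{μ}` as a function of `h`. -/
noncomputable def ewc (μ : Fin n → ℚ) (h : Fin n → ℂ) : ℂ :=
  Complex.exp (∑ a, (μ a : ℂ) * h a)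

/-- The simple reflection `s_a` on the weight space (in `Λ̄`-coordinates):
`s_a(μ) = μ − μ_a α_a`, `α_a = Σ_b C_{ba} Λ̄_b`. -/
noncomputable def reflMap (D : CartanDatum n) (a : Fin n) :
    (Fin n → ℚ) →ₗ[ℚ] (Fin n → ℚ) :=
  LinearMap.id - (LinearMap.proj a).smulRight (fun b => (D.C b a : ℚ))

/-- The Weyl group of `X_n`, realized as the monoid generated by the simple
reflections (it is a group since the generators are involutions). -/
noncomputable def weylGroup (D : CartanDatum n) :
    Submonoid ((Fin n → ℚ) →ₗ[ℚ] (Fin n → ℚ)) :=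
  Submonoid.closure (Set.range (reflMap D))

/-- The Weyl numerator `Σ_{w ∈ W} (det w) e^{wμ}`. -/
noncomputable def weylNum (D : CartanDatum n) (μ : Fin n → ℚ) (h : Fin n → ℂ) : ℂ :=
  ∑ᶠ w ∈ (weylGroup D : Set ((Fin n → ℚ) →ₗ[ℚ] (Fin n → ℚ))),
    ((LinearMap.det w : ℚ) : ℂ) * ewc (w μ) h

/-- The irreducible character `ch V(λ)` of `X_n`, by the Weyl character formula
(`ρ̄ = Σ_a Λ̄_a` has all coordinates `1`). -/
noncomputable def chV (D : CartanDatum n) (lam : Fin n → ℚ) (h : Fin n → ℂ) : ℂ :=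
  weylNum D (fun a => lam a + 1) h / weylNum D (fun _ => 1) h

/-- The set of roots of `X_n`: the Weyl group orbit of the simple roots
(in `Λ̄`-coordinates). -/
def rootSet (D : CartanDatum n) : Set (Fin n → ℚ) :=
  {β | ∃ w ∈ (weylGroup D : Set ((Fin n → ℚ) →ₗ[ℚ] (Fin n → ℚ))),
    ∃ a : Fin n, β = w (fun b => (D.C b a : ℚ))}

/-- The set of positive roots of `X_n`. -/
def posRootSet (D : CartanDatum n) : Set (Fin n → ℚ) :=
  {β | β ∈ rootSet D ∧ ∃ c : Fin n → ℚ, (∀ b, 0 ≤ c b) ∧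
    ∀ b, β b = ∑ a, (D.C b a : ℚ) * c a}

/-- The ring `ℤ[x_1^{±1},…,x_n^{±1}] = ℤ[P̄]` of Laurent polynomials, i.e. the group
ring of the weight lattice, with `e^{μ} = x^{μ}` the basis monomials. -/
abbrev LaurentA (n : ℕ) : Type := AddMonoidAlgebra ℤ (Fin n → ℤ)

/-- The partial derivative `∂/∂x_b` on `ℤ[x_1^{±1},…,x_n^{±1}]`:
`x^{μ} ↦ μ_b x^{μ − e_b}`. -/
noncomputable def pder (b : Fin n) (f : LaurentA n) : LaurentA n :=
  AddMonoidAlgebra.ofCoeff (Finsupp.sum f.coeff fun μ c => Finsupp.single (μ - Pi.single b 1) (c * μ b))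

/-- The action of the simple reflection `w_a` on `ℤ[P̄]`, `e^{μ} ↦ e^{w_a(μ)}`. -/
noncomputable def reflW (D : CartanDatum n) (a : Fin n) (f : LaurentA n) : LaurentA n :=
  AddMonoidAlgebra.ofCoeff (Finsupp.sum f.coeff fun μ c => Finsupp.single (fun b => μ b - μ a * D.C b a) c)

/-!
The chain rule for the monomial substitution `x_c ↦ e^{s_a Λ̄_c}` gives `J = s_a(J) A_a` for the
Jacobian matrix `J`, with `det A_a = -e^{-α_a}`; hence `N = det J` satisfies `s_a N = -e^{α_a} N`,
i.e. `e^ρ N` is alternating. Since the exponents of `Q^{(a)}_1` lie in `Λ̄_a - Q₊`, those of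
`∂Q^{(a)}_1/∂x_b` lie in `Λ̄_a - Λ̄_b - Q₊`, so `N` is supported in `-Q₊` with constant term `1`.
The Weyl denominator `∏_{α>0}(1 - e^{-α})` has the same three properties, and they determine an
element: for the difference, a descent along simple reflections shows that an alternating element
supported in `ρ - Q₊` without an `e^ρ` term vanishes.

The root-system facts needed about the Weyl denominator (finitely many positive roots, every root
positive or negative, `s_a` permuting the positive roots other than `α_a`) are read off from `N`
itself: for every root `β`, the coefficient of `e^{-⟨ρ, β^∨⟩ β}` in `N` is `-1`, because the
reflection `s_β` maps `ρ` to `ρ - ⟨ρ, β^∨⟩ β` and has odd length.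
-/

open scoped Matrix
open AddMonoidAlgebra

section SupportedBelow

variable {R M : Type*} [CommRing R] [AddCommGroup M] (S : AddSubmonoid M)

noncomputable def supportedBelow (d : M) : Submodule R R[M] := supported R R {v | d - v ∈ S}

variable {S}

theorem mem_supportedBelow {d : M} {f : R[M]} :
    f ∈ supportedBelow S d ↔ ∀ v ∈ f.coeff.support, d - v ∈ S :=
  mem_supported

theorem single_mem_supportedBelow {d v : M} (h : d - v ∈ S) (r : R) :
    single v r ∈ supportedBelow S d :=
  mem_supportedBelow.2 fun w hw => by
    rwa [Finset.mem_singleton.1 (Finsupp.support_single_subset hw)]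

theorem one_mem_supportedBelow : (1 : R[M]) ∈ supportedBelow S 0 :=
  single_mem_supportedBelow (by simp) 1

theorem mul_mem_supportedBelow {d e : M} {f g : R[M]} (hf : f ∈ supportedBelow S d)
    (hg : g ∈ supportedBelow S e) : f * g ∈ supportedBelow S (d + e) := by
  classical
  refine mem_supportedBelow.2 fun v hv => ?_
  obtain ⟨x, hx, y, hy, rfl⟩ := Finset.mem_add.1 (support_coeff_mul_subset f g hv)
  rw [add_sub_add_comm]
  exact S.add_mem (mem_supportedBelow.1 hf x hx) (mem_supportedBelow.1 hg y hy)

theorem coeff_mul_of_mem_supportedBelow (hS : ∀ v ∈ S, -v ∈ S → v = 0) {d e : M} {f g : R[M]}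
    (hf : f ∈ supportedBelow S d) (hg : g ∈ supportedBelow S e) :
    (f * g).coeff (d + e) = f.coeff d * g.coeff e := by
  classical
  have hde : ∀ x ∈ f.coeff.support, ∀ y ∈ g.coeff.support, x + y = d + e → x = d := by
    intro x hx y hy hxy
    have hy' : e - y = -(d - x) := eq_neg_of_add_eq_zero_left <| by
      rw [show e - y + (d - x) = d + e - (x + y) by abel, hxy, sub_self]
    exact (sub_eq_zero.1 (hS _ (mem_supportedBelow.1 hf x hx)
      (hy' ▸ mem_supportedBelow.1 hg y hy))).symm
  rw [coeff_mul, Finsupp.sum_eq_single d, Finsupp.sum_eq_single e]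
  · simp
  · intro y hy hye
    rw [if_neg fun h => hye (add_left_cancel h)]
  · simp
  · intro x hx hxd
    exact Finset.sum_eq_zero fun y hy =>
      if_neg fun h => hxd (hde x (Finsupp.mem_support_iff.2 hx) y hy h)
  · simp

theorem prod_mem_supportedBelow {ι : Type*} (s : Finset ι) {d : ι → M} {F : ι → R[M]}
    (hF : ∀ i ∈ s, F i ∈ supportedBelow S (d i)) :
    ∏ i ∈ s, F i ∈ supportedBelow S (∑ i ∈ s, d i) := by
  classical
  induction s using Finset.induction with
  | empty => exact one_mem_supportedBelow
  | insert i s hi ih =>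
    rw [Finset.prod_insert hi, Finset.sum_insert hi]
    exact mul_mem_supportedBelow (hF i (s.mem_insert_self i))
      (ih fun j hj => hF j (Finset.mem_insert_of_mem hj))

theorem coeff_prod_of_mem_supportedBelow (hS : ∀ v ∈ S, -v ∈ S → v = 0) {ι : Type*}
    (s : Finset ι) {d : ι → M} {F : ι → R[M]} (hF : ∀ i ∈ s, F i ∈ supportedBelow S (d i)) :
    (∏ i ∈ s, F i).coeff (∑ i ∈ s, d i) = ∏ i ∈ s, (F i).coeff (d i) := by
  classical
  induction s using Finset.induction with
  | empty => simp [one_def]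
  | insert i s hi ih =>
    have hs : ∀ j ∈ s, F j ∈ supportedBelow S (d j) := fun j hj =>
      hF j (Finset.mem_insert_of_mem hj)
    rw [Finset.prod_insert hi, Finset.sum_insert hi, Finset.prod_insert hi,
      coeff_mul_of_mem_supportedBelow hS (hF i (s.mem_insert_self i))
        (prod_mem_supportedBelow s hs), ih hs]

variable {ι : Type*} [Fintype ι] [DecidableEq ι]

theorem det_mem_supportedBelow {x y : ι → M} {A : Matrix ι ι R[M]}
    (hA : ∀ i j, A i j ∈ supportedBelow S (x i - y j)) :
    A.det ∈ supportedBelow S (∑ i, x i - ∑ i, y i) := by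
  rw [Matrix.det_apply]
  refine Submodule.sum_mem _ fun σ _ => ?_
  rw [Units.smul_def]
  refine Submodule.smul_of_tower_mem _ _ ?_
  have := prod_mem_supportedBelow Finset.univ fun i _ => hA (σ i) i
  rwa [Finset.sum_sub_distrib, Equiv.sum_comp σ x] at this

theorem coeff_det_of_mem_supportedBelow (hS : ∀ v ∈ S, -v ∈ S → v = 0) {x y : ι → M}
    {A : Matrix ι ι R[M]} (hA : ∀ i j, A i j ∈ supportedBelow S (x i - y j)) :
    A.det.coeff (∑ i, x i - ∑ i, y i) = (Matrix.of fun i j => (A i j).coeff (x i - y j)).det := by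
  rw [Matrix.det_apply, Matrix.det_apply, coeff_sum, Finsupp.finsetSum_apply]
  refine Finset.sum_congr rfl fun σ _ => ?_
  have := coeff_prod_of_mem_supportedBelow hS Finset.univ fun i _ => hA (σ i) i
  rw [Finset.sum_sub_distrib, Equiv.sum_comp σ x] at this
  rw [Units.smul_def, Units.smul_def, coeff_smul, Finsupp.smul_apply, this]
  rfl

end SupportedBelow

section RootCone

/-- The Cartan matrix over `ℤ`, mapping root coordinates to weight coordinates. -/
def cartan : Matrix (Fin n) (Fin n) ℤ := Matrix.of D.C

theorem sum_mul_Cmat_mulVec_pos {v : Fin n → ℚ} (hv : v ≠ 0) :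
    0 < ∑ a, v a / D.t a * (D.Cmat *ᵥ v) a := by
  convert D.posdef v hv using 2 with a
  simp only [Matrix.mulVec, dotProduct, Finset.mul_sum, CartanDatum.Cmat, Matrix.of_apply]
  exact Finset.sum_congr rfl fun b _ => by ring

theorem Cmat_mulVec_injective : Function.Injective D.Cmat.mulVec := by
  refine (injective_iff_map_eq_zero D.Cmat.mulVecLin).2 fun v hv => ?_
  by_contra hv0
  have := sum_mul_Cmat_mulVec_pos D hv0
  simp_all

theorem cast_cartan_mulVec (u : Fin n → ℤ) :
    (fun b => ((cartan D *ᵥ u) b : ℚ)) = D.Cmat *ᵥ fun b => (u b : ℚ) := by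
  ext b
  simp [Matrix.mulVec, dotProduct, cartan, CartanDatum.Cmat]

theorem cartan_mulVec_injective : Function.Injective (cartan D).mulVec := by
  intro u u' h
  have h' : D.Cmat *ᵥ (fun b => (u b : ℚ)) = D.Cmat *ᵥ (fun b => (u' b : ℚ)) := by
    rw [← cast_cartan_mulVec, ← cast_cartan_mulVec, h]
  have := Cmat_mulVec_injective D h'
  ext b
  exact_mod_cast congrFun this b

theorem eq_zero_of_nonneg_of_cartan_mulVec_nonpos {w : Fin n → ℤ} (hw : 0 ≤ w)
    (h : cartan D *ᵥ w ≤ 0) : w = 0 := by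
  by_contra hw0
  have hq : (fun b => (w b : ℚ)) ≠ 0 := fun h0 =>
    hw0 (funext fun b => by simpa using congrFun h0 b)
  refine (sum_mul_Cmat_mulVec_pos D hq).not_ge (Finset.sum_nonpos fun a _ => ?_)
  rw [← cast_cartan_mulVec]
  exact mul_nonpos_of_nonneg_of_nonpos (div_nonneg (by exact_mod_cast hw a) (Nat.cast_nonneg _))
    (show ((cartan D *ᵥ w) a : ℚ) ≤ 0 by exact_mod_cast h a)

/-- The cone `Q₊ = Σ_b ℤ_{≥0} α_b` in weight coordinates. -/
def rootCone : AddSubmonoid (Fin n → ℤ) where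
  carrier := {v | ∃ u, 0 ≤ u ∧ cartan D *ᵥ u = v}
  add_mem' := by
    rintro _ _ ⟨u, hu, rfl⟩ ⟨u', hu', rfl⟩
    exact ⟨u + u', add_nonneg hu hu', Matrix.mulVec_add _ _ _⟩
  zero_mem' := ⟨0, le_rfl, Matrix.mulVec_zero _⟩

theorem cartan_mulVec_mem_rootCone_iff {u : Fin n → ℤ} : cartan D *ᵥ u ∈ rootCone D ↔ 0 ≤ u :=
  ⟨fun ⟨_, hu', h⟩ => cartan_mulVec_injective D h ▸ hu', fun hu => ⟨u, hu, rfl⟩⟩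

theorem rootCone_salient : ∀ v ∈ rootCone D, -v ∈ rootCone D → v = 0 := by
  rintro _ ⟨u, hu, rfl⟩ hv'
  rw [← Matrix.mulVec_neg, cartan_mulVec_mem_rootCone_iff] at hv'
  rw [le_antisymm (neg_nonneg.1 hv') hu, Matrix.mulVec_zero]

end RootCone

section Reflections

/-- `α_a` in weight coordinates. -/
def simpleRoot (a : Fin n) : Fin n → ℤ := fun b => D.C b a

theorem cartan_mulVec_single (a : Fin n) : cartan D *ᵥ Pi.single a 1 = simpleRoot D a := by
  ext b
  simp [cartan, simpleRoot]

def reflWeight (a : Fin n) : (Fin n → ℤ) →+ (Fin n → ℤ) where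
  toFun v := v - v a • simpleRoot D a
  map_zero' := by simp
  map_add' v w := by simp only [Pi.add_apply, add_smul]; abel

theorem reflWeight_apply (a : Fin n) (v : Fin n → ℤ) :
    reflWeight D a v = v - v a • simpleRoot D a :=
  rfl

theorem reflWeight_reflWeight (a : Fin n) (v : Fin n → ℤ) :
    reflWeight D a (reflWeight D a v) = v := by
  ext b
  simp only [reflWeight_apply, Pi.sub_apply, Pi.smul_apply, smul_eq_mul, simpleRoot, D.diag]
  ring

theorem reflW_eq_mapDomain (a : Fin n) (f : LaurentA n) :
    reflW D a f = mapDomainRingHom ℤ (reflWeight D a) f := rfl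

theorem coeff_reflW (a : Fin n) (f : LaurentA n) (v : Fin n → ℤ) :
    (reflW D a f).coeff v = f.coeff (reflWeight D a v) := by
  have := Finsupp.mapDomain_apply (Function.Involutive.injective (reflWeight_reflWeight D a))
    f.coeff (reflWeight D a v)
  rwa [reflWeight_reflWeight] at this

theorem reflW_single (a : Fin n) (v : Fin n → ℤ) (r : ℤ) :
    reflW D a (single v r) = single (reflWeight D a v) r :=
  mapDomain_single

end Reflections

section Jacobian

theorem coeff_pder (b : Fin n) (f : LaurentA n) (v : Fin n → ℤ) :
    (pder b f).coeff v = f.coeff (v + Pi.single b 1) * (v + Pi.single b 1 : Fin n → ℤ) b := by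
  classical
  rw [pder, coeff_ofCoeff, Finsupp.sum_apply, Finsupp.sum, Finset.sum_eq_single (v + Pi.single b 1)]
  · simp
  · intro μ _ hμ
    rw [Finsupp.single_apply, if_neg fun h => hμ (by rw [← h]; abel)]
  · intro h
    rw [Finsupp.notMem_support_iff.1 h, zero_mul, Finsupp.single_zero, Finsupp.zero_apply]

theorem pder_single (b : Fin n) (μ : Fin n → ℤ) (r : ℤ) :
    pder b (single μ r) = single (μ - Pi.single b 1) (r * μ b) := by
  rw [pder, coeff_single, Finsupp.sum_single_index (by simp)]
  rfl

noncomputable def jacobian (Q : Fin n → LaurentA n) : Matrix (Fin n) (Fin n) (LaurentA n) :=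
  Matrix.of fun a b => pder b (Q a)

/-- The chain rule for the monomial substitution `x_c ↦ e^{s_a Λ̄_c}`. -/
theorem pder_reflW (a b : Fin n) (f : LaurentA n) :
    pder b (reflW D a f) =
      ∑ c, reflW D a (pder c f) * pder b (single (reflWeight D a (Pi.single c 1)) 1) := by
  classical
  ext v
  set x := reflWeight D a (v + Pi.single b 1)
  have hterm : ∀ c,
      (reflW D a (pder c f) * pder b (single (reflWeight D a (Pi.single c 1)) 1)).coeff v =
        f.coeff x * (x c * reflWeight D a (Pi.single c 1) b) := by
    intro c
    have hx : reflWeight D a (v + -(reflWeight D a (Pi.single c 1) - Pi.single b 1)) +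
        Pi.single c 1 = x := by
      simp only [map_add, map_neg, map_sub, reflWeight_reflWeight, x]
      abel
    rw [pder_single, coeff_mul_single_apply, coeff_reflW, coeff_pder, hx, one_mul, mul_assoc]
  have hsum : ∑ c, x c * reflWeight D a (Pi.single c 1) b = reflWeight D a x b := by
    conv_rhs => rw [pi_eq_sum_univ' x]
    simp only [map_sum, map_zsmul, Finset.sum_apply, Pi.smul_apply, smul_eq_mul]
  rw [coeff_sum, Finsupp.finsetSum_apply, Finset.sum_congr rfl fun c _ => hterm c, ← Finset.mul_sum,
    hsum, reflWeight_reflWeight, coeff_pder, coeff_reflW]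

theorem jacobian_reflW (a : Fin n) (Q : Fin n → LaurentA n) :
    jacobian (fun c => reflW D a (Q c)) =
      (jacobian Q).map (reflW D a) *
        jacobian fun c => single (reflWeight D a (Pi.single c 1)) 1 := by
  ext c b
  simp only [jacobian, Matrix.mul_apply, Matrix.map_apply, Matrix.of_apply, pder_reflW]

theorem det_updateRow_one {R ι : Type*} [CommRing R] [Fintype ι] [DecidableEq ι] (i : ι)
    (r : ι → R) : ((1 : Matrix ι ι R).updateRow i r).det = r i := by
  have hr : r = ∑ k, r k • (1 : Matrix ι ι R) k := by
    ext j
    simp [Matrix.one_apply]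
  conv_lhs => rw [hr]
  rw [Matrix.det_updateRow_sum, Matrix.det_one, smul_eq_mul, mul_one]

theorem det_jacobian_reflWeight_single (a : Fin n) :
    (jacobian fun c => single (reflWeight D a (Pi.single c 1)) 1).det =
      -single (-simpleRoot D a) 1 := by
  have hrow : (jacobian fun c => single (reflWeight D a (Pi.single c 1)) 1) =
      (1 : Matrix (Fin n) (Fin n) (LaurentA n)).updateRow a
        fun b => pder b (single (reflWeight D a (Pi.single a 1)) 1) := by
    ext c b
    rcases eq_or_ne c a with rfl | hca
    · simp [jacobian]
    · have hfix : reflWeight D a (Pi.single c 1) = Pi.single c 1 := by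
        simp [reflWeight_apply, hca.symm]
      rw [Matrix.updateRow_ne hca, jacobian, Matrix.of_apply, hfix, pder_single, one_mul]
      rcases eq_or_ne c b with rfl | hcb
      · simp [one_def]
      · simp [Matrix.one_apply_ne hcb, hcb.symm]
  have hsa : reflWeight D a (Pi.single a 1) = Pi.single a 1 - simpleRoot D a := by
    simp [reflWeight_apply]
  rw [hrow, det_updateRow_one, pder_single, one_mul, hsa, sub_sub_cancel_left]
  simp [simpleRoot, D.diag]

/-- The transformation law of the Weyl denominator `∏_{α>0}(1 - e^{-α})`. -/
def TwistedAlternating (f : LaurentA n) : Prop :=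
  ∀ a, reflW D a f = -(single (simpleRoot D a) 1 * f)

theorem twistedAlternating_det_jacobian {Q : Fin n → LaurentA n}
    (hinv : ∀ a b, reflW D a (Q b) = Q b) : TwistedAlternating D (jacobian Q).det := by
  intro a
  have h : (jacobian Q).det = ((jacobian Q).map (reflW D a)).det * -single (-simpleRoot D a) 1 := by
    simpa only [hinv, Matrix.det_mul, det_jacobian_reflWeight_single] using
      congrArg Matrix.det (jacobian_reflW D a Q)
  have hmap : reflW D a (jacobian Q).det = ((jacobian Q).map (reflW D a)).det := by
    rw [reflW_eq_mapDomain, RingHom.map_det]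
    rfl
  have hunit : single (simpleRoot D a) (1 : ℤ) * single (-simpleRoot D a) 1 = 1 := by
    rw [single_mul_single, add_neg_cancel, mul_one, one_def]
  rw [hmap]
  linear_combination single (simpleRoot D a) 1 * h - ((jacobian Q).map (reflW D a)).det * hunit

end Jacobian

section JacobianLeadingTerm

variable {D} {Q : Fin n → LaurentA n}

theorem pder_mem_supportedBelow {S : AddSubmonoid (Fin n → ℤ)} {d : Fin n → ℤ} {f : LaurentA n}
    (b : Fin n) (hf : f ∈ supportedBelow S d) :
    pder b f ∈ supportedBelow S (d - Pi.single b 1) := by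
  refine mem_supportedBelow.2 fun v hv => ?_
  have hv' : v + Pi.single b 1 ∈ f.coeff.support := by
    rw [Finsupp.mem_support_iff, coeff_pder] at hv
    exact Finsupp.mem_support_iff.2 (left_ne_zero_of_mul hv)
  rw [sub_sub, add_comm]
  exact mem_supportedBelow.1 hf _ hv'

theorem jacobian_mem_supportedBelow (hQ : ∀ a, Q a ∈ supportedBelow (rootCone D) (Pi.single a 1))
    (a b : Fin n) :
    jacobian Q a b ∈ supportedBelow (rootCone D) (Pi.single a 1 - Pi.single b 1) :=
  pder_mem_supportedBelow b (hQ a)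

theorem det_jacobian_mem_supportedBelow
    (hQ : ∀ a, Q a ∈ supportedBelow (rootCone D) (Pi.single a 1)) :
    (jacobian Q).det ∈ supportedBelow (rootCone D) 0 := by
  simpa using det_mem_supportedBelow (jacobian_mem_supportedBelow hQ)

theorem coeff_zero_det_jacobian (hQ : ∀ a, Q a ∈ supportedBelow (rootCone D) (Pi.single a 1))
    (hlead : ∀ a, (Q a).coeff (Pi.single a 1) = 1) : (jacobian Q).det.coeff 0 = 1 := by
  have h := coeff_det_of_mem_supportedBelow (rootCone_salient D)
    (jacobian_mem_supportedBelow hQ)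
  have hlc : (Matrix.of fun a b => (jacobian Q a b).coeff (Pi.single a 1 - Pi.single b 1)) = 1 := by
    ext a b
    rw [Matrix.of_apply, jacobian, Matrix.of_apply, coeff_pder, sub_add_cancel, hlead, one_mul,
      Matrix.one_apply, Pi.single_apply]
    exact if_congr eq_comm rfl rfl
  rwa [hlc, Matrix.det_one, sub_self] at h

end JacobianLeadingTerm

section Words

variable {M N : Type*} [AddCommGroup M] [AddCommGroup N]

def wordHom (r : Fin n → M →+ M) (l : List (Fin n)) : M →+ M :=
  l.foldr (fun a w => (r a).comp w) (AddMonoidHom.id M)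

variable (r : Fin n → M →+ M)

@[simp] theorem wordHom_nil (x : M) : wordHom r [] x = x := rfl

@[simp] theorem wordHom_cons (a : Fin n) (l : List (Fin n)) (x : M) :
    wordHom r (a :: l) x = r a (wordHom r l x) := rfl

theorem wordHom_append (l l' : List (Fin n)) (x : M) :
    wordHom r (l ++ l') x = wordHom r l (wordHom r l' x) := by
  induction l <;> simp [*]

variable {r}

theorem wordHom_reverse_wordHom (hr : ∀ a x, r a (r a x) = x) (l : List (Fin n)) (x : M) :
    wordHom r l.reverse (wordHom r l x) = x := by
  induction l generalizing x with
  | nil => rfl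
  | cons a l ih => simp [wordHom_append, hr, ih]

theorem wordHom_wordHom_reverse (hr : ∀ a x, r a (r a x) = x) (l : List (Fin n)) (x : M) :
    wordHom r l (wordHom r l.reverse x) = x := by
  simpa using wordHom_reverse_wordHom hr l.reverse x

theorem map_wordHom {r' : Fin n → N →+ N} {f : M → N} (h : ∀ a x, f (r a x) = r' a (f x))
    (l : List (Fin n)) (x : M) : f (wordHom r l x) = wordHom r' l (f x) := by
  induction l <;> simp [*]

end Words

section Roots

/-- The simple reflection `s_a` in root coordinates, see `cartan_mulVec_reflRoot`. -/
def reflRoot (a : Fin n) : (Fin n → ℤ) →+ (Fin n → ℤ) where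
  toFun u := u - (cartan D *ᵥ u) a • Pi.single a 1
  map_zero' := by simp
  map_add' u w := by simp only [Matrix.mulVec_add, Pi.add_apply, add_smul]; abel

theorem cartan_mulVec_reflRoot (a : Fin n) (u : Fin n → ℤ) :
    cartan D *ᵥ reflRoot D a u = reflWeight D a (cartan D *ᵥ u) := by
  simp only [reflRoot, AddMonoidHom.coe_mk, ZeroHom.coe_mk, Matrix.mulVec_sub, Matrix.mulVec_smul,
    cartan_mulVec_single, reflWeight_apply]

theorem reflRoot_reflRoot (a : Fin n) (u : Fin n → ℤ) : reflRoot D a (reflRoot D a u) = u :=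
  cartan_mulVec_injective D <| by
    rw [cartan_mulVec_reflRoot, cartan_mulVec_reflRoot, reflWeight_reflWeight]

theorem reflRoot_single_self (a : Fin n) : reflRoot D a (Pi.single a 1) = -Pi.single a 1 := by
  refine cartan_mulVec_injective D ?_
  rw [cartan_mulVec_reflRoot, Matrix.mulVec_neg, cartan_mulVec_single, reflWeight_apply]
  simp only [simpleRoot, D.diag]
  abel

theorem reflRoot_apply_of_ne {a b : Fin n} (h : b ≠ a) (u : Fin n → ℤ) :
    reflRoot D a u b = u b := by
  simp [reflRoot, h]

/-- The roots of `X_n`, written in root coordinates `β = Σ_a u_a α_a`. -/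
def IsRoot (u : Fin n → ℤ) : Prop := ∃ l c, u = wordHom (reflRoot D) l (Pi.single c 1)

theorem isRoot_single (c : Fin n) : IsRoot D (Pi.single c 1) := ⟨[], c, rfl⟩

variable {D}

theorem IsRoot.map_reflRoot {u : Fin n → ℤ} (hu : IsRoot D u) (a : Fin n) :
    IsRoot D (reflRoot D a u) := by
  obtain ⟨l, c, rfl⟩ := hu
  exact ⟨a :: l, c, rfl⟩

theorem IsRoot.neg {u : Fin n → ℤ} (hu : IsRoot D u) : IsRoot D (-u) := by
  obtain ⟨l, c, rfl⟩ := hu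
  refine ⟨l ++ [c], c, ?_⟩
  rw [wordHom_append, wordHom_cons, wordHom_nil, reflRoot_single_self, map_neg]

theorem IsRoot.ne_zero {u : Fin n → ℤ} (hu : IsRoot D u) : u ≠ 0 := by
  obtain ⟨l, c, rfl⟩ := hu
  intro h
  have := congrArg (wordHom (reflRoot D) l.reverse) h
  rw [wordHom_reverse_wordHom (reflRoot_reflRoot D), map_zero] at this
  exact one_ne_zero (α := ℤ) (by simpa using congrFun this c)

theorem IsRoot.eq_of_smul_eq_smul {u u' : Fin n → ℤ} (hu : IsRoot D u) (hu' : IsRoot D u')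
    {k k' : ℤ} (hk : 0 < k) (hk' : 0 < k') (h : k • u = k' • u') : u = u' := by
  -- apply `w⁻¹` to `k • w(e_c) = k' • u'` and read off the `c`-th coordinate
  have hcoord : ∀ {u u' : Fin n → ℤ} {k k' : ℤ}, IsRoot D u → k • u = k' • u' →
      ∃ z : ℤ, k = k' * z := by
    rintro u u' k k' ⟨l, c, rfl⟩ h
    refine ⟨wordHom (reflRoot D) l.reverse u' c, ?_⟩
    have := congrArg (fun x => wordHom (reflRoot D) l.reverse x c) h
    simpa only [map_zsmul, Pi.smul_apply, smul_eq_mul, Pi.single_eq_same, mul_one,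
      wordHom_reverse_wordHom (reflRoot_reflRoot D)] using this
  obtain ⟨z, hz⟩ := hcoord hu h
  obtain ⟨z', hz'⟩ := hcoord hu' h.symm
  have hzpos : 0 < z := pos_of_mul_pos_right (hz ▸ hk) hk'.le
  have hzpos' : 0 < z' := pos_of_mul_pos_right (hz' ▸ hk') hk.le
  have hkk : k = k' := le_antisymm (by nlinarith) (by nlinarith)
  exact smul_right_injective _ hk.ne' (hkk ▸ h)

end Roots

section Pairing

/-- The invariant pairing `(μ | β)` of a weight `μ` in weight coordinates with `β = Σ_a u_a α_a`,
using `(Λ̄_a | α_b) = δ_{ab} / t_a`. -/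
def pairing (v u : Fin n → ℤ) : ℚ := ∑ a, (v a * u a : ℚ) / D.t a

theorem pairing_single_right (v : Fin n → ℤ) (c : Fin n) :
    pairing D v (Pi.single c 1) = v c / D.t c := by
  simp [pairing, Pi.single_apply, ite_div]

theorem pairing_neg_right (v u : Fin n → ℤ) : pairing D v (-u) = -pairing D v u := by
  simp [pairing, ← Finset.sum_neg_distrib, neg_div]

theorem pairing_reflWeight_reflRoot (a : Fin n) (v u : Fin n → ℤ) :
    pairing D (reflWeight D a v) (reflRoot D a u) = pairing D v u := by
  have ht : ∀ b, (D.t b : ℚ) ≠ 0 := fun b => Nat.cast_ne_zero.2 (D.t_pos b).ne'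
  have hsymm : ∀ b, (D.C b a : ℚ) / D.t b = D.C a b / D.t a := fun b => by
    rw [div_eq_div_iff (ht b) (ht a)]
    exact_mod_cast (by linarith [D.symm a b] : D.C b a * (D.t a : ℤ) = D.C a b * D.t b)
  have hy : ((cartan D *ᵥ u) a : ℚ) / D.t a = ∑ b, (D.C a b : ℚ) / D.t a * u b := by
    simp [Matrix.mulVec, dotProduct, cartan, Finset.sum_div, div_mul_eq_mul_div]
  have key : ∀ b, ((reflWeight D a v b : ℚ) * reflRoot D a u b) / D.t b = (v b * u b : ℚ) / D.t b
      - v a * (D.C a b / D.t a * u b)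
      - if b = a then ((cartan D *ᵥ u) a : ℚ) * (v a - v a * D.C a a) / D.t a else 0 := by
    intro b
    rcases eq_or_ne b a with rfl | hb
    · simp only [reflWeight_apply, reflRoot, AddMonoidHom.coe_mk, ZeroHom.coe_mk, Pi.sub_apply,
        Pi.smul_apply, smul_eq_mul, simpleRoot, Pi.single_eq_same, if_true]
      push_cast
      field_simp
    · rw [reflRoot_apply_of_ne D hb, if_neg hb, ← hsymm b]
      simp only [reflWeight_apply, Pi.sub_apply, Pi.smul_apply, smul_eq_mul, simpleRoot]
      push_cast
      field_simp
      ring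
  simp only [pairing]
  rw [Finset.sum_congr rfl fun b _ => key b, Finset.sum_sub_distrib, Finset.sum_sub_distrib,
    ← Finset.mul_sum, ← hy, Finset.sum_ite_eq', if_pos (Finset.mem_univ a), D.diag]
  field_simp
  ring

theorem pairing_wordHom (l : List (Fin n)) (v u : Fin n → ℤ) :
    pairing D (wordHom (reflWeight D) l v) (wordHom (reflRoot D) l u) = pairing D v u := by
  induction l <;> simp [pairing_reflWeight_reflRoot, *]

end Pairing

section DenominatorLike

def rho : Fin n → ℤ := fun _ => 1

theorem reflWeight_rho (a : Fin n) : reflWeight D a (rho (n := n)) = rho - simpleRoot D a := by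
  simp [reflWeight_apply, rho]

def posRoots : Set (Fin n → ℤ) := {u | IsRoot D u ∧ 0 ≤ u}

/-- The three properties of the Weyl denominator `∏_{α>0}(1 - e^{-α})` that determine it. -/
structure IsDenominatorLike (N : LaurentA n) : Prop where
  twistedAlternating : TwistedAlternating D N
  supported : N ∈ supportedBelow (rootCone D) 0
  coeff_zero : N.coeff 0 = 1

variable {D} {N : LaurentA n}

/-- The coefficients of `e^ρ N` are alternating. -/
theorem TwistedAlternating.coeff_reflWeight_sub_rho (hN : TwistedAlternating D N) (a : Fin n)
    (v : Fin n → ℤ) : N.coeff (reflWeight D a v - rho) = -N.coeff (v - rho) := by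
  have h := congrArg (fun f : LaurentA n => f.coeff (reflWeight D a (v - rho))) (hN a)
  simp only [coeff_reflW, reflWeight_reflWeight, coeff_neg, Finsupp.neg_apply,
    coeff_single_mul_apply, one_mul] at h
  rw [h, neg_neg, map_sub (reflWeight D a), reflWeight_rho]
  congr 1
  abel

theorem TwistedAlternating.coeff_wordHom_sub_rho (hN : TwistedAlternating D N) (l : List (Fin n))
    (v : Fin n → ℤ) :
    N.coeff (wordHom (reflWeight D) l v - rho) = (-1) ^ l.length * N.coeff (v - rho) := by
  induction l with
  | nil => simp
  | cons a l ih =>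
    rw [wordHom_cons, hN.coeff_reflWeight_sub_rho, ih, List.length_cons, pow_succ]
    ring

theorem IsDenominatorLike.exists_coeff_eq_neg_one (hN : IsDenominatorLike D N) {u : Fin n → ℤ}
    (hu : IsRoot D u) : ∃ k : ℤ, ∃ s : ℚ, 0 < s ∧ (k : ℚ) = s * pairing D rho u ∧
      N.coeff (-(k • cartan D *ᵥ u)) = -1 := by
  obtain ⟨l, c, rfl⟩ := hu
  set x := wordHom (reflWeight D) l.reverse rho
  have hx : wordHom (reflWeight D) l x = rho :=
    wordHom_wordHom_reverse (reflWeight_reflWeight D) l rho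
  refine ⟨x c, D.t c, by exact_mod_cast D.t_pos c, ?_, ?_⟩
  · rw [← hx, pairing_wordHom, pairing_single_right]
    field_simp [(Nat.cast_pos.2 (D.t_pos c)).ne']
  -- `w s_c w⁻¹` is the reflection in `β = w α_c`, and it maps `ρ = w x` to `ρ - x_c β`
  have hreflect : wordHom (reflWeight D) l (reflWeight D c x) - rho =
      -(x c • cartan D *ᵥ wordHom (reflRoot D) l (Pi.single c 1)) := by
    rw [reflWeight_apply, map_sub, map_zsmul, hx, map_wordHom (cartan_mulVec_reflRoot D),
      cartan_mulVec_single]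
    abel
  have hsign := hN.twistedAlternating.coeff_wordHom_sub_rho l x
  rw [hx, sub_self, hN.coeff_zero] at hsign
  rw [← hreflect, hN.twistedAlternating.coeff_wordHom_sub_rho,
    hN.twistedAlternating.coeff_reflWeight_sub_rho, mul_neg, ← hsign]

theorem IsDenominatorLike.pairing_rho_ne_zero (hN : IsDenominatorLike D N) {u : Fin n → ℤ}
    (hu : IsRoot D u) : pairing D rho u ≠ 0 := by
  intro h0
  obtain ⟨k, s, -, hk, hcoeff⟩ := hN.exists_coeff_eq_neg_one hu
  rw [h0, mul_zero, Int.cast_eq_zero] at hk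
  rw [hk, zero_smul, neg_zero, hN.coeff_zero] at hcoeff
  norm_num at hcoeff

theorem IsDenominatorLike.nonneg_of_pairing_rho_pos (hN : IsDenominatorLike D N) {u : Fin n → ℤ}
    (hu : IsRoot D u) (hpos : 0 < pairing D rho u) : 0 ≤ u := by
  obtain ⟨k, s, hs, hk, hcoeff⟩ := hN.exists_coeff_eq_neg_one hu
  have hk0 : 0 < k := by exact_mod_cast hk ▸ mul_pos hs hpos
  have hmem := mem_supportedBelow.1 hN.supported _
    (Finsupp.mem_support_iff.2 (by rw [hcoeff]; norm_num))
  rw [zero_sub, neg_neg, ← Matrix.mulVec_smul, cartan_mulVec_mem_rootCone_iff] at hmem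
  exact fun b => nonneg_of_mul_nonneg_right (hmem b) hk0

theorem IsDenominatorLike.pairing_rho_pos (hN : IsDenominatorLike D N) {u : Fin n → ℤ}
    (hu : u ∈ posRoots D) : 0 < pairing D rho u :=
  lt_of_le_of_ne (Finset.sum_nonneg fun a _ => div_nonneg (by simpa [rho] using hu.2 a)
    (Nat.cast_nonneg _)) (hN.pairing_rho_ne_zero hu.1).symm

theorem IsDenominatorLike.reflRoot_mem_posRoots (hN : IsDenominatorLike D N) {a : Fin n}
    {u : Fin n → ℤ} (hu : u ∈ posRoots D) (hne : u ≠ Pi.single a 1) :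
    reflRoot D a u ∈ posRoots D := by
  have hr := hu.1.map_reflRoot a
  refine ⟨hr, ?_⟩
  rcases (hN.pairing_rho_ne_zero hr).lt_or_gt with hneg | hpos
  · -- then `s_a u ≤ 0`, and `u ≥ 0` differs from `s_a u` only at `a`, so `u ∈ ℤ_{>0} α_a`
    exfalso
    have hle := hN.nonneg_of_pairing_rho_pos hr.neg (by rw [pairing_neg_right]; linarith)
    have hoff : ∀ b, b ≠ a → u b = 0 := fun b hb => by
      have := hle b
      simp only [Pi.zero_apply, Pi.neg_apply, reflRoot_apply_of_ne D hb] at this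
      exact le_antisymm (by linarith) (hu.2 b)
    have hu_eq : u = u a • Pi.single a 1 := by
      ext b
      rcases eq_or_ne b a with rfl | hb
      · simp
      · simp [hoff b hb, hb]
    have hua : 0 < u a := (hu.2 a).lt_of_ne fun h => hu.1.ne_zero (by rw [hu_eq, ← h]; simp)
    exact hne (hu.1.eq_of_smul_eq_smul (isRoot_single D a) one_pos hua (by rwa [one_smul]))
  · exact hN.nonneg_of_pairing_rho_pos hr hpos

theorem reflRoot_ne_single_of_nonneg {a : Fin n} {u : Fin n → ℤ} (hu : 0 ≤ u) :
    reflRoot D a u ≠ Pi.single a 1 := by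
  intro h
  have := hu a
  rw [← reflRoot_reflRoot D a u, h, reflRoot_single_self] at this
  simp at this

theorem IsDenominatorLike.finite_posRoots (hN : IsDenominatorLike D N) : (posRoots D).Finite := by
  have hk : ∀ u, ∃ k : ℤ, u ∈ posRoots D → 0 < k ∧ -(k • cartan D *ᵥ u) ∈ N.coeff.support := by
    intro u
    by_cases hu : u ∈ posRoots D
    · obtain ⟨k, s, hs, hk, hcoeff⟩ := hN.exists_coeff_eq_neg_one hu.1
      exact ⟨k, fun _ => ⟨by exact_mod_cast hk ▸ mul_pos hs (hN.pairing_rho_pos hu),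
        Finsupp.mem_support_iff.2 (by rw [hcoeff]; norm_num)⟩⟩
    · exact ⟨0, fun h => absurd h hu⟩
  choose k hk using hk
  refine Set.Finite.of_finite_image (f := fun u => -(k u • cartan D *ᵥ u))
    (N.coeff.support.finite_toSet.subset ?_) fun u hu u' hu' h => ?_
  · rintro _ ⟨u, hu, rfl⟩
    exact (hk u hu).2
  · have : k u • u = k u' • u' :=
      cartan_mulVec_injective D (by simpa only [Matrix.mulVec_smul, neg_inj] using h)
    exact hu.1.eq_of_smul_eq_smul hu'.1 (hk u hu).1 (hk u' hu').1 this

end DenominatorLike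

section WeylDenominator

noncomputable def weylDenom (P : Finset (Fin n → ℤ)) : LaurentA n :=
  ∏ u ∈ P, (1 - single (-(cartan D *ᵥ u)) 1)

variable {D}

theorem one_sub_single_mem_supportedBelow {u : Fin n → ℤ} (hu : 0 ≤ u) :
    (1 - single (-(cartan D *ᵥ u)) 1 : LaurentA n) ∈ supportedBelow (rootCone D) 0 :=
  sub_mem one_mem_supportedBelow
    (single_mem_supportedBelow (by rwa [zero_sub, neg_neg, cartan_mulVec_mem_rootCone_iff]) 1)

theorem weylDenom_mem_supportedBelow {P : Finset (Fin n → ℤ)} (hP : ∀ u ∈ P, 0 ≤ u) :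
    weylDenom D P ∈ supportedBelow (rootCone D) 0 := by
  simpa [weylDenom] using
    prod_mem_supportedBelow P fun u hu => one_sub_single_mem_supportedBelow (hP u hu)

theorem coeff_zero_weylDenom {P : Finset (Fin n → ℤ)} (hP : ∀ u ∈ P, 0 ≤ u ∧ u ≠ 0) :
    (weylDenom D P).coeff 0 = 1 := by
  have := coeff_prod_of_mem_supportedBelow (rootCone_salient D) P fun u hu =>
    one_sub_single_mem_supportedBelow (hP u hu).1
  rw [Finset.sum_const_zero] at this
  rw [weylDenom, this]
  refine Finset.prod_eq_one fun u hu => ?_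
  have hne : -(cartan D *ᵥ u) ≠ 0 := by
    rw [neg_ne_zero, ← Matrix.mulVec_zero (cartan D)]
    exact (cartan_mulVec_injective D).ne (hP u hu).2
  simp [one_def, hne]

theorem IsDenominatorLike.twistedAlternating_weylDenom {N : LaurentA n}
    (hN : IsDenominatorLike D N) :
    TwistedAlternating D (weylDenom D hN.finite_posRoots.toFinset) := by
  intro a
  set P := hN.finite_posRoots.toFinset
  have hP : ∀ {u}, u ∈ P ↔ u ∈ posRoots D := Set.Finite.mem_toFinset _
  have hsingle : Pi.single a 1 ∈ P := hP.2 ⟨isRoot_single D a, Pi.single_nonneg.2 zero_le_one⟩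
  have hfactor : ∀ u, reflW D a (1 - single (-(cartan D *ᵥ u)) 1) =
      1 - single (-(cartan D *ᵥ reflRoot D a u)) 1 := by
    intro u
    rw [reflW_eq_mapDomain, map_sub, map_one, ← reflW_eq_mapDomain, reflW_single, map_neg,
      cartan_mulVec_reflRoot]
  have hperm : ∏ u ∈ P.erase (Pi.single a 1), (1 - single (-(cartan D *ᵥ reflRoot D a u)) 1) =
      ∏ u ∈ P.erase (Pi.single a 1), (1 - single (-(cartan D *ᵥ u)) (1 : ℤ)) := by
    have hmaps : ∀ u ∈ P.erase (Pi.single a 1), reflRoot D a u ∈ P.erase (Pi.single a 1) := by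
      intro u hu
      obtain ⟨hne, hu⟩ := Finset.mem_erase.1 hu
      exact Finset.mem_erase.2 ⟨reflRoot_ne_single_of_nonneg (hP.1 hu).2,
        hP.2 (hN.reflRoot_mem_posRoots (hP.1 hu) hne)⟩
    exact Finset.prod_nbij' (reflRoot D a) (reflRoot D a) hmaps hmaps
      (fun u _ => reflRoot_reflRoot D a u) (fun u _ => reflRoot_reflRoot D a u) fun u _ => rfl
  have hsimple : 1 - single (-(cartan D *ᵥ reflRoot D a (Pi.single a 1))) (1 : ℤ) =
      -(single (simpleRoot D a) 1 * (1 - single (-(cartan D *ᵥ Pi.single a 1)) 1)) := by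
    rw [reflRoot_single_self, Matrix.mulVec_neg, neg_neg, cartan_mulVec_single, mul_sub, mul_one,
      single_mul_single, add_neg_cancel, mul_one, one_def]
    abel
  rw [weylDenom, reflW_eq_mapDomain, map_prod]
  simp only [← reflW_eq_mapDomain, hfactor]
  rw [← Finset.mul_prod_erase P _ hsingle, ← Finset.mul_prod_erase P _ hsingle, hperm, hsimple]
  ring

theorem IsDenominatorLike.weylDenom {N : LaurentA n} (hN : IsDenominatorLike D N) :
    IsDenominatorLike D (weylDenom D hN.finite_posRoots.toFinset) where
  twistedAlternating := hN.twistedAlternating_weylDenom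
  supported := weylDenom_mem_supportedBelow fun _ hu => ((Set.Finite.mem_toFinset _).1 hu).2
  coeff_zero := coeff_zero_weylDenom fun _ hu =>
    ⟨((Set.Finite.mem_toFinset _).1 hu).2, ((Set.Finite.mem_toFinset _).1 hu).1.ne_zero⟩

end WeylDenominator

section Uniqueness

variable {D} {f g : LaurentA n}

theorem TwistedAlternating.sub (hf : TwistedAlternating D f) (hg : TwistedAlternating D g) :
    TwistedAlternating D (f - g) := fun a => by
  rw [reflW_eq_mapDomain, map_sub, ← reflW_eq_mapDomain, ← reflW_eq_mapDomain, hf a, hg a]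
  ring

/-- Induction on the height of `u`. The coefficient of `e^ρ f` at `v = ρ - Cu` is, up to sign, the
one at `s_a v`, which is strictly higher when `v_a < 0`; it vanishes when `v_a = 0`; and `v ≥ ρ`
forces `u = 0`. -/
theorem TwistedAlternating.coeff_neg_cartan_mulVec_eq_zero (hf : TwistedAlternating D f)
    (hs : f ∈ supportedBelow (rootCone D) 0) (h0 : f.coeff 0 = 0) {u : Fin n → ℤ} (hu : 0 ≤ u) :
    f.coeff (-(cartan D *ᵥ u)) = 0 := by
  induction hm : (∑ b, u b).toNat using Nat.strong_induction_on generalizing u with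
  | _ m ih =>
  obtain ⟨v, hv⟩ : ∃ v, v - rho = -(cartan D *ᵥ u) := ⟨rho - cartan D *ᵥ u, by abel⟩
  have hstep : ∀ a, f.coeff (-(cartan D *ᵥ (u + v a • Pi.single a 1))) =
      -f.coeff (-(cartan D *ᵥ u)) := by
    intro a
    rw [← hv, ← hf.coeff_reflWeight_sub_rho a, reflWeight_apply, Matrix.mulVec_add,
      Matrix.mulVec_smul, cartan_mulVec_single, neg_add, ← hv]
    congr 1
    abel
  by_cases hneg : ∃ a, v a < 0
  · obtain ⟨a, ha⟩ := hneg
    rw [← neg_eq_zero, ← hstep a]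
    by_cases hu' : 0 ≤ u + v a • Pi.single a 1
    · refine ih _ ?_ hu' rfl
      have hsum : ∑ b, (u + v a • Pi.single a 1 : Fin n → ℤ) b = ∑ b, u b + v a := by
        simp [Finset.sum_add_distrib, Pi.single_apply]
      have := Finset.sum_nonneg fun b (_ : b ∈ Finset.univ) => hu' b
      omega
    · by_contra hne
      have := mem_supportedBelow.1 hs _ (Finsupp.mem_support_iff.2 hne)
      rw [zero_sub, neg_neg, cartan_mulVec_mem_rootCone_iff] at this
      exact hu' this
  simp only [not_exists, not_lt] at hneg
  by_cases hzero : ∃ a, v a = 0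
  · obtain ⟨a, ha⟩ := hzero
    have := hstep a
    rw [ha, zero_smul, add_zero] at this
    exact self_eq_neg.1 this
  simp only [not_exists] at hzero
  have hu0 : u = 0 := eq_zero_of_nonneg_of_cartan_mulVec_nonpos D hu fun b => by
    have hb := congrFun hv b
    have := (hneg b).lt_of_ne' (hzero b)
    simp only [Pi.sub_apply, Pi.neg_apply, rho] at hb
    simp only [Pi.zero_apply]
    omega
  rw [hu0, Matrix.mulVec_zero, neg_zero, h0]

theorem TwistedAlternating.eq_zero (hf : TwistedAlternating D f)
    (hs : f ∈ supportedBelow (rootCone D) 0) (h0 : f.coeff 0 = 0) : f = 0 := by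
  ext w
  by_contra hne
  obtain ⟨u, hu, hw⟩ := mem_supportedBelow.1 hs w (Finsupp.mem_support_iff.2 hne)
  rw [zero_sub, neg_eq_iff_eq_neg.symm] at hw
  exact hne (hw ▸ hf.coeff_neg_cartan_mulVec_eq_zero hs h0 hu)

theorem IsDenominatorLike.eq {N N' : LaurentA n} (hN : IsDenominatorLike D N)
    (hN' : IsDenominatorLike D N') : N = N' :=
  sub_eq_zero.1 <| (hN.twistedAlternating.sub hN'.twistedAlternating).eq_zero
    (sub_mem hN.supported hN'.supported) (by simp [hN.coeff_zero, hN'.coeff_zero])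

end Uniqueness

section PositiveRoots

theorem reflMap_intCast (a : Fin n) (v : Fin n → ℤ) :
    reflMap D a (fun b => (v b : ℚ)) = fun b => (reflWeight D a v b : ℚ) := by
  ext b
  simp [reflMap, reflWeight_apply, simpleRoot]

theorem list_prod_map_reflMap_intCast (l : List (Fin n)) (v : Fin n → ℤ) :
    (l.map (reflMap D)).prod (fun b => (v b : ℚ)) =
      fun b => (wordHom (reflWeight D) l v b : ℚ) := by
  induction l with
  | nil => rfl
  | cons a l ih =>
    rw [List.map_cons, List.prod_cons, Module.End.mul_apply, ih, reflMap_intCast]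
    rfl

theorem intCast_simpleRoot (c : Fin n) :
    (fun b => (D.C b c : ℚ)) = fun b => ((cartan D *ᵥ Pi.single c 1) b : ℚ) := by
  rw [cartan_mulVec_single]
  rfl

theorem mem_rootSet_iff {β : Fin n → ℚ} :
    β ∈ rootSet D ↔ ∃ u, IsRoot D u ∧ β = fun b => ((cartan D *ᵥ u) b : ℚ) := by
  constructor
  · rintro ⟨w, hw, c, rfl⟩
    have key : ∀ u, IsRoot D u → ∃ u', IsRoot D u' ∧
        w (fun b => ((cartan D *ᵥ u) b : ℚ)) = fun b => ((cartan D *ᵥ u') b : ℚ) := by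
      induction hw using Submonoid.closure_induction with
      | mem x hx =>
        obtain ⟨a, rfl⟩ := hx
        exact fun u hu => ⟨_, hu.map_reflRoot a, by rw [reflMap_intCast, cartan_mulVec_reflRoot]⟩
      | one => exact fun u hu => ⟨u, hu, rfl⟩
      | mul x y _ _ hx hy =>
        intro u hu
        obtain ⟨u₁, hu₁, h₁⟩ := hy u hu
        obtain ⟨u₂, hu₂, h₂⟩ := hx u₁ hu₁
        exact ⟨u₂, hu₂, by rw [Module.End.mul_apply, h₁, h₂]⟩
    rw [intCast_simpleRoot]
    exact key _ (isRoot_single D c)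
  · rintro ⟨u, ⟨l, c, rfl⟩, rfl⟩
    refine ⟨(l.map (reflMap D)).prod, Submonoid.list_prod_mem _ fun x hx => ?_, c, ?_⟩
    · obtain ⟨a, -, rfl⟩ := List.mem_map.1 hx
      exact Submonoid.subset_closure ⟨a, rfl⟩
    · rw [intCast_simpleRoot, list_prod_map_reflMap_intCast,
        map_wordHom (cartan_mulVec_reflRoot D)]

theorem setOf_intCast_mem_posRootSet :
    {β : Fin n → ℤ | (fun b => (β b : ℚ)) ∈ posRootSet D} = (cartan D *ᵥ ·) '' posRoots D := by
  ext β
  constructor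
  · rintro ⟨hroot, c, hc, hβ⟩
    obtain ⟨u, hu, hβu⟩ := (mem_rootSet_iff D).1 hroot
    have hβu' : β = cartan D *ᵥ u := funext fun b => by exact_mod_cast congrFun hβu b
    have hcu : c = fun b => (u b : ℚ) := Cmat_mulVec_injective D <| by
      rw [← cast_cartan_mulVec, ← hβu]
      exact (funext hβ).symm
    exact ⟨u, ⟨hu, fun b => by simpa [hcu] using hc b⟩, hβu'.symm⟩
  · rintro ⟨u, ⟨hu, hu0⟩, rfl⟩
    refine ⟨(mem_rootSet_iff D).2 ⟨u, hu, rfl⟩, fun b => u b, fun b => by simpa using hu0 b,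
      fun b => ?_⟩
    simp [Matrix.mulVec, dotProduct, cartan]

end PositiveRoots

/-- Lemma: the Jacobian `det(∂Q^{(a)}_1/∂x_b)`.
If `Q^{(1)}_1, …, Q^{(n)}_1 ∈ ℤ[x_1^{±1},…,x_n^{±1}]` are Weyl-group-invariant
Laurent polynomials of the form `Q^{(a)}_1 = x_a(1 + Σ_{β≠0} c_β e^{−β})`,
`β ∈ Σ_b ℤ_{≥0} α_b`, then `det(∂Q^{(a)}_1/∂x_b) = ∏_{α>0}(1 − e^{−α})`,
the product over the positive roots of `X_n`. -/
theorem statement17 (n : ℕ) (D : CartanDatum n)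
    (Q : Fin n → LaurentA n)
    (hinv : ∀ a b, reflW D a (Q b) = Q b)
    (hlead : ∀ a : Fin n, (Q a).coeff (Pi.single a (1 : ℤ)) = 1)
    (hsupp : ∀ a : Fin n, ∀ μ ∈ (Q a).coeff.support, μ ≠ Pi.single a (1 : ℤ) →
      ∃ u : Fin n → ℕ, ∀ b, (Pi.single a 1 : Fin n → ℤ) b - μ b = ∑ c, D.C b c * (u c : ℤ)) :
    (Matrix.of fun a b => pder b (Q a)).det
      = ∏ᶠ β ∈ {β : Fin n → ℤ | (fun b => (β b : ℚ)) ∈ posRootSet D},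
          ((1 : LaurentA n) - AddMonoidAlgebra.single (-β) 1) := by
  have hQ : ∀ a, Q a ∈ supportedBelow (rootCone D) (Pi.single a 1) := fun a =>
    mem_supportedBelow.2 fun μ hμ => by
      rcases eq_or_ne μ (Pi.single a 1) with rfl | hne
      · rw [sub_self]
        exact zero_mem _
      · obtain ⟨u, hu⟩ := hsupp a μ hμ hne
        exact ⟨fun c => u c, fun c => by simp, funext fun b => (hu b).symm⟩
  have hN : IsDenominatorLike D (jacobian Q).det :=
    ⟨twistedAlternating_det_jacobian D hinv, det_jacobian_mem_supportedBelow hQ,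
      coeff_zero_det_jacobian hQ hlead⟩
  rw [setOf_intCast_mem_posRootSet, ← hN.finite_posRoots.coe_toFinset, ← Finset.coe_image,
    finprod_mem_coe_finset, Finset.prod_image fun u _ u' _ h => cartan_mulVec_injective D h]
  exact hN.eq hN.weylDenom

end FermionicPaper
end
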